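/- arXiv:2305.08720 — 11 statements merged into one kernel-verified Lean document; each statement's English description precedes it below -/
import Mathlib

section
/- Let K be a finitely generated additive submonoid (a "cone") of ℤ^N. Then there exists an element w₀ ∈ K such that every element w of the subgroup of ℤ^N generated by K for which w − w₀ is a nonnegative real linear combination of elements of K (viewing vectors in ℝ^N) already lies in K. In symbols: there exists w₀ ∈ K with ℤK ∩ (w₀ + ℝ≥0K) ⊆ K. -/
/-- `ℝ≥0 K`: the set of all finite nonnegative real linear combinations of
elements of `K`, viewed inside `ℝ^N` via the inclusion `ℤ^N ⊆ ℝ^N`. -/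
def nonnegRealCone (N : ℕ) (K : AddSubmonoid (Fin N → ℤ)) : AddSubmonoid (Fin N → ℝ) :=
  AddSubmonoid.closure
    {x : Fin N → ℝ | ∃ (c : ℝ) (v : Fin N → ℤ), 0 ≤ c ∧ v ∈ K ∧
      x = c • fun i => (v i : ℝ)}

section Aux

/-- There is a `ℚ`-linear functional on `ℝ` restricting to the identity on `ℚ`. -/
lemma exists_rat_retraction : ∃ π : ℝ →ₗ[ℚ] ℚ, ∀ q : ℚ, π (q : ℝ) = q := by
  have h1 : ¬ ∀ φ : Module.Dual ℚ ℝ, φ 1 = 0 := fun h =>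
    one_ne_zero ((Module.forall_dual_apply_eq_zero_iff ℚ (1 : ℝ)).mp h)
  push_neg at h1
  obtain ⟨φ, hφ⟩ := h1
  refine ⟨(φ 1)⁻¹ • φ, fun q => ?_⟩
  have : (q : ℝ) = q • (1 : ℝ) := by simp
  rw [this, LinearMap.smul_apply, map_smul, smul_eq_mul, smul_eq_mul]
  field_simp

lemma eq_zero_of_forall_dual (r : ℝ) (h : ∀ φ : ℝ →ₗ[ℚ] ℚ, φ r = 0) : r = 0 :=
  (Module.forall_dual_apply_eq_zero_iff ℚ r).mp h

/-- A rational (integer) vector which is a nonnegative **real** combination of integer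
vectors is also a nonnegative **rational** combination of them. -/
lemma rationalize (N : ℕ) :
    ∀ (n : ℕ) (s : Finset (Fin N → ℤ)) (c : (Fin N → ℤ) → ℝ) (x : Fin N → ℤ),
      s.card ≤ n → (∀ v ∈ s, 0 ≤ c v) →
      ((fun i => (x i : ℝ)) = ∑ v ∈ s, c v • fun i => (v i : ℝ)) →
      ∃ q : (Fin N → ℤ) → ℚ, (∀ v, 0 ≤ q v) ∧
        ((fun i => (x i : ℚ)) = ∑ v ∈ s, q v • fun i => (v i : ℚ)) := by
  intro n
  induction n with
  | zero =>
    intro s c x hcard _ hx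
    have hs : s = ∅ := Finset.card_eq_zero.mp (Nat.le_zero.mp hcard)
    subst hs
    refine ⟨0, fun v => le_rfl, ?_⟩
    simp only [Finset.sum_empty] at hx ⊢
    funext i
    have := congrFun hx i
    simp only [Pi.zero_apply] at this ⊢
    exact_mod_cast this
  | succ n ih =>
    intro s c x hcard hc hx
    classical
    have h1 : ∀ i, (x i : ℝ) = ∑ v ∈ s, c v * (v i : ℝ) := by
      intro i
      have := congrFun hx i
      simpa [Finset.sum_apply] using this
    by_cases hli : LinearIndependent ℚ (fun v : {v // v ∈ s} => (fun i => ((v : Fin N → ℤ) i : ℚ)))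
    · -- independent case: the coefficients are automatically rational
      obtain ⟨π, hπ⟩ := exists_rat_retraction
      set q0 : (Fin N → ℤ) → ℚ := fun v => π (c v) with hq0def
      have key : ∀ (r : ℝ) (m : ℤ) (ψ : ℝ →ₗ[ℚ] ℚ), ψ (r * (m : ℝ)) = ψ r * (m : ℚ) := by
        intro r m ψ
        have h : r * (m : ℝ) = (m : ℚ) • r := by
          rw [Rat.smul_def]
          push_cast
          ring
        rw [h, map_smul, smul_eq_mul]
        ring
      have hxQ : ∀ i, (x i : ℚ) = ∑ v ∈ s, q0 v * (v i : ℚ) := by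
        intro i
        have e1 : ((x i : ℚ) : ℝ) = ∑ v ∈ s, c v * (v i : ℝ) := by
          rw [← h1 i]; push_cast; ring
        have e2 : π ((x i : ℚ) : ℝ) = (x i : ℚ) := hπ _
        rw [e1, map_sum] at e2
        rw [← e2]
        refine (Finset.sum_congr rfl fun v _ => ?_).symm
        rw [key]
      -- show (q0 v : ℝ) = c v for v ∈ s
      have hδ : ∀ i, ∑ v ∈ s, (c v - (q0 v : ℝ)) * (v i : ℝ) = 0 := by
        intro i
        have e1 : ((x i : ℚ) : ℝ) = ∑ v ∈ s, ((q0 v : ℝ)) * ((v i : ℝ)) := by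
          rw [hxQ i]; push_cast; ring_nf
        have e3 : ((x i : ℚ) : ℝ) = (x i : ℝ) := by push_cast; ring
        rw [e3, h1 i] at e1
        rw [Finset.sum_congr rfl (fun v _ => sub_mul (c v) _ _), Finset.sum_sub_distrib,
          ← e1, sub_self]
      have hrat : ∀ v ∈ s, (q0 v : ℝ) = c v := by
        intro v hv
        have : c v - (q0 v : ℝ) = 0 := by
          apply eq_zero_of_forall_dual
          intro ψ
          have hsum0 : ∑ w : {v // v ∈ s}, (fun w : {v // v ∈ s} =>
              ψ (c (w : Fin N → ℤ) - (q0 (w : Fin N → ℤ) : ℝ))) w •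
              (fun i => ((w : Fin N → ℤ) i : ℚ)) = 0 := by
            funext i
            simp only [Finset.sum_apply, Pi.smul_apply, smul_eq_mul, Pi.zero_apply]
            calc ∑ w : {v // v ∈ s}, ψ (c (w:Fin N → ℤ) - (q0 (w:Fin N → ℤ) : ℝ)) * (((w:Fin N → ℤ)) i : ℚ)
                = ∑ w : {v // v ∈ s}, ψ ((c (w:Fin N → ℤ) - (q0 (w:Fin N → ℤ) : ℝ)) * (((w:Fin N → ℤ)) i : ℝ)) := by
                  refine Finset.sum_congr rfl fun w _ => ?_
                  rw [key]
              _ = ψ (∑ w : {v // v ∈ s}, (c (w:Fin N → ℤ) - (q0 (w:Fin N → ℤ) : ℝ)) * (((w:Fin N → ℤ)) i : ℝ)) := (map_sum ψ _ _).symm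
              _ = ψ 0 := by
                  congr 1
                  rw [Finset.sum_coe_sort s (fun v => (c v - (q0 v : ℝ)) * ((v i : ℝ)))]
                  exact hδ i
              _ = 0 := map_zero ψ
          have := Fintype.linearIndependent_iff.mp hli _ hsum0 ⟨v, hv⟩
          simpa using this
        linarith [this]
      refine ⟨fun v => if v ∈ s then q0 v else 0, fun v => ?_, ?_⟩
      · by_cases hv : v ∈ s
        · simp only [if_pos hv]
          have := hrat v hv
          have hcv := hc v hv
          rw [← this] at hcv
          exact_mod_cast hcv
        · simp [if_neg hv]
      · funext i
        simp only [Finset.sum_apply, Pi.smul_apply, smul_eq_mul]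
        rw [hxQ i]
        exact Finset.sum_congr rfl fun v hv => by rw [if_pos hv]
    · -- dependent case: eliminate one vector and recurse
      rw [Fintype.not_linearIndependent_iff] at hli
      obtain ⟨g, hg0, i₀, hi₀⟩ := hli
      -- WLOG g has a positive entry
      obtain ⟨g, hg0, i₀, hi₀⟩ :
          ∃ g : {v // v ∈ s} → ℚ, (∑ w : {v // v ∈ s}, g w • (fun i => ((w : Fin N → ℤ) i : ℚ))) = 0
            ∧ ∃ i₀, 0 < g i₀ := by
        rcases lt_trichotomy (g i₀) 0 with h | h | h
        · exact ⟨-g, by simpa using hg0, i₀, by simpa using h⟩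
        · exact absurd h hi₀
        · exact ⟨g, hg0, i₀, h⟩
      set d : (Fin N → ℤ) → ℚ := fun v => if h : v ∈ s then g ⟨v, h⟩ else 0 with hddef
      have hdg : ∀ w : {v // v ∈ s}, d (w : Fin N → ℤ) = g w := by
        intro w; simp [hddef]
      have hdsum : ∀ i, ∑ v ∈ s, d v * (v i : ℚ) = 0 := by
        intro i
        rw [← Finset.sum_attach s (fun v => d v * ((v i : ℚ)))]
        have := congrFun hg0 i
        simp only [Finset.sum_apply, Pi.smul_apply, smul_eq_mul, Pi.zero_apply] at this
        rw [← this]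
        exact Finset.sum_congr rfl fun w _ => by rw [hdg]
      have hdsumR : ∀ i, ∑ v ∈ s, ((d v : ℝ)) * ((v i : ℝ)) = 0 := by
        intro i
        have h := hdsum i
        have h2 : ((∑ v ∈ s, d v * (v i : ℚ) : ℚ) : ℝ) = 0 := by rw [h]; norm_num
        push_cast at h2
        exact h2
      set P := s.filter (fun v => 0 < d v) with hPdef
      have hPne : P.Nonempty := ⟨(i₀ : Fin N → ℤ), by
        simp only [hPdef, Finset.mem_filter]
        exact ⟨i₀.2, by rw [hdg]; exact hi₀⟩⟩
      obtain ⟨v₀, hv₀P, hv₀min⟩ := P.exists_min_image (fun v => c v / (d v : ℝ)) hPne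
      have hv₀s : v₀ ∈ s := (Finset.mem_filter.mp hv₀P).1
      have hdv₀ : 0 < d v₀ := (Finset.mem_filter.mp hv₀P).2
      have hdv₀R : (0 : ℝ) < (d v₀ : ℝ) := by exact_mod_cast hdv₀
      set t : ℝ := c v₀ / (d v₀ : ℝ) with htdef
      have ht0 : 0 ≤ t := div_nonneg (hc v₀ hv₀s) hdv₀R.le
      set c' : (Fin N → ℤ) → ℝ := fun v => c v - t * (d v : ℝ) with hc'def
      have hc'0 : ∀ v ∈ s, 0 ≤ c' v := by
        intro v hv
        simp only [hc'def]
        by_cases hdv : 0 < d v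
        · have hvP : v ∈ P := Finset.mem_filter.mpr ⟨hv, hdv⟩
          have := hv₀min v hvP
          have hdvR : (0 : ℝ) < (d v : ℝ) := by exact_mod_cast hdv
          rw [div_le_div_iff₀ hdv₀R hdvR] at this
          have : t * (d v : ℝ) ≤ c v := by
            rw [htdef, div_mul_eq_mul_div, div_le_iff₀ hdv₀R]
            linarith [this]
          linarith
        · have hdvR : (d v : ℝ) ≤ 0 := by
            push_neg at hdv
            exact_mod_cast hdv
          have := mul_nonpos_of_nonneg_of_nonpos ht0 hdvR
          linarith [hc v hv]
      have hc'v₀ : c' v₀ = 0 := by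
        simp only [hc'def, htdef]
        field_simp
        ring
      have hx' : (fun i => (x i : ℝ)) = ∑ v ∈ s.erase v₀, c' v • fun i => (v i : ℝ) := by
        funext i
        simp only [Finset.sum_apply, Pi.smul_apply, smul_eq_mul]
        have e1 : ∑ v ∈ s, c' v * (v i : ℝ) = ∑ v ∈ s.erase v₀, c' v * (v i : ℝ) := by
          rw [← Finset.add_sum_erase s (fun v => c' v * ((v i : ℝ))) hv₀s, hc'v₀, zero_mul,
            zero_add]
        rw [← e1]
        have e2 : ∑ v ∈ s, c' v * (v i : ℝ)
            = ∑ v ∈ s, c v * (v i : ℝ) - t * ∑ v ∈ s, ((d v : ℝ)) * ((v i : ℝ)) := by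
          rw [Finset.mul_sum, ← Finset.sum_sub_distrib]
          refine Finset.sum_congr rfl fun v _ => ?_
          simp only [hc'def]
          ring
        rw [e2, hdsumR i, mul_zero, sub_zero, h1 i]
      have hcard' : (s.erase v₀).card ≤ n := by
        rw [Finset.card_erase_of_mem hv₀s]
        omega
      obtain ⟨q, hq0, hqx⟩ := ih (s.erase v₀) c' x hcard'
        (fun v hv => hc'0 v (Finset.mem_of_mem_erase hv)) hx'
      refine ⟨fun v => if v ∈ s.erase v₀ then q v else 0, fun v => ?_, ?_⟩
      · show (0:ℚ) ≤ if v ∈ s.erase v₀ then q v else 0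
        by_cases hv : v ∈ s.erase v₀
        · rw [if_pos hv]; exact hq0 v
        · rw [if_neg hv]
      · funext i
        simp only [Finset.sum_apply, Pi.smul_apply, smul_eq_mul]
        have := congrFun hqx i
        simp only [Finset.sum_apply, Pi.smul_apply, smul_eq_mul] at this
        rw [this]
        rw [← Finset.add_sum_erase s
          (fun v => (if v ∈ s.erase v₀ then q v else 0) * ((v i : ℚ))) hv₀s]
        rw [if_neg (Finset.notMem_erase v₀ s), zero_mul, zero_add]
        exact Finset.sum_congr rfl fun v hv => by rw [if_pos hv]

/-- Elements of the real cone are nonnegative real combinations of the generators. -/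
lemma cone_rep (N : ℕ) (K : AddSubmonoid (Fin N → ℤ)) (S : Finset (Fin N → ℤ))
    (hS : AddSubmonoid.closure (S : Set (Fin N → ℤ)) = K) {x : Fin N → ℝ}
    (hx : x ∈ nonnegRealCone N K) :
    ∃ c : (Fin N → ℤ) → ℝ, (∀ v, 0 ≤ c v) ∧ x = ∑ v ∈ S, c v • fun i => (v i : ℝ) := by
  classical
  set Pr : (Fin N → ℝ) → Prop :=
    fun y => ∃ c : (Fin N → ℤ) → ℝ, (∀ v, 0 ≤ c v) ∧ y = ∑ v ∈ S, c v • fun i => (v i : ℝ)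
    with hPrdef
  have hPr0 : Pr 0 := ⟨0, fun v => le_rfl, by simp⟩
  have hPradd : ∀ y z, Pr y → Pr z → Pr (y + z) := by
    rintro y z ⟨c₁, hc₁, rfl⟩ ⟨c₂, hc₂, rfl⟩
    refine ⟨c₁ + c₂, fun v => add_nonneg (hc₁ v) (hc₂ v), ?_⟩
    rw [← Finset.sum_add_distrib]
    exact Finset.sum_congr rfl fun v _ => by rw [Pi.add_apply, add_smul]
  have hPrsmul : ∀ (a : ℝ), 0 ≤ a → ∀ y, Pr y → Pr (a • y) := by
    rintro a ha y ⟨c, hc, rfl⟩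
    refine ⟨fun v => a * c v, fun v => mul_nonneg ha (hc v), ?_⟩
    rw [Finset.smul_sum]
    exact Finset.sum_congr rfl fun v _ => by rw [smul_smul]
  have hK : ∀ v ∈ K, Pr (fun i => (v i : ℝ)) := by
    intro v hv
    rw [← hS] at hv
    induction hv using AddSubmonoid.closure_induction with
    | mem w hw =>
      refine ⟨fun v => if v = w then 1 else 0, fun v => by positivity, ?_⟩
      funext i
      simp only [Finset.sum_apply, Pi.smul_apply, smul_eq_mul, ite_mul, one_mul, zero_mul]
      rw [Finset.sum_ite_eq' S w (fun v => ((v i : ℝ)))]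
      exact (if_pos (Finset.mem_coe.mp hw)).symm
    | zero => simpa [← Pi.zero_def] using hPr0
    | add y z hy hz hPy hPz =>
      have := hPradd _ _ hPy hPz
      convert this using 1
      funext i
      push_cast [Pi.add_apply]
      ring
  induction hx using AddSubmonoid.closure_induction with
  | mem y hy =>
    obtain ⟨a, v, ha, hv, rfl⟩ := hy
    exact hPrsmul a ha _ (hK v hv)
  | zero => exact hPr0
  | add y z _ _ hPy hPz => exact hPradd y z hPy hPz

/-- Elements of the group generated by a submonoid are differences of elements of it. -/
lemma group_rep {M : Type*} [AddCommGroup M] (K : AddSubmonoid M) {u : M}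
    (hu : u ∈ AddSubgroup.closure (K : Set M)) : ∃ a ∈ K, ∃ b ∈ K, u = a - b := by
  induction hu using AddSubgroup.closure_induction with
  | mem x hx => exact ⟨x, hx, 0, zero_mem K, by simp⟩
  | zero => exact ⟨0, zero_mem K, 0, zero_mem K, by simp⟩
  | add x y hx hy hPx hPy =>
    obtain ⟨a, ha, b, hb, rfl⟩ := hPx
    obtain ⟨a', ha', b', hb', rfl⟩ := hPy
    exact ⟨a + a', add_mem ha ha', b + b', add_mem hb hb', by abel⟩
  | neg x hx hPx =>
    obtain ⟨a, ha, b, hb, rfl⟩ := hPx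
    exact ⟨b, hb, a, ha, by abel⟩

end Aux

/-- **Lemma (cones are maximally dense far from their borders).**
For any finitely generated cone `K ⊆ ℤ^N` there exists `w₀ ∈ K` such that
`ℤK ∩ (w₀ + ℝ≥0 K) ⊆ K`. -/
theorem dense_lemma (N : ℕ) (K : AddSubmonoid (Fin N → ℤ))
    (hfg : ∃ S : Finset (Fin N → ℤ), AddSubmonoid.closure (S : Set (Fin N → ℤ)) = K) :
    ∃ w₀ ∈ K, ∀ w ∈ AddSubgroup.closure (K : Set (Fin N → ℤ)),
      ((fun i => ((w i : ℝ) - (w₀ i : ℝ))) ∈ nonnegRealCone N K) → w ∈ K := by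
  classical
  obtain ⟨S, hS⟩ := hfg
  have hSK : ∀ v ∈ S, v ∈ K := fun v hv => hS ▸ AddSubmonoid.subset_closure hv
  set G := AddSubgroup.closure (K : Set (Fin N → ℤ)) with hGdef
  set Mb : Fin N → ℤ := fun i => ∑ v ∈ S, |v i| with hMbdef
  set T : Finset (Fin N → ℤ) := Finset.Icc (-Mb) Mb with hTdef
  set F : Finset (Fin N → ℤ) := T.filter (fun u => u ∈ G) with hFdef
  have hrep : ∀ u : Fin N → ℤ, ∃ b, b ∈ K ∧ (u ∈ G → u + b ∈ K) := by
    intro u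
    by_cases h : u ∈ G
    · obtain ⟨a, ha, b, hb, rfl⟩ := group_rep K h
      exact ⟨b, hb, fun _ => by simpa using ha⟩
    · exact ⟨0, zero_mem K, fun h' => absurd h' h⟩
  choose f hfK hfadd using hrep
  set w₀ : Fin N → ℤ := ∑ u ∈ F, f u with hw₀def
  have hw₀K : w₀ ∈ K := sum_mem (fun u _ => hfK u)
  refine ⟨w₀, hw₀K, ?_⟩
  intro w hwG hwcone
  -- 1. real representation
  have hxcast : (fun i => ((w i : ℝ) - (w₀ i : ℝ))) = fun i => (((w - w₀) i : ℤ) : ℝ) := by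
    funext i
    push_cast [Pi.sub_apply]
    ring
  rw [hxcast] at hwcone
  obtain ⟨c, hc0, hcx⟩ := cone_rep N K S hS hwcone
  -- 2. rational representation
  obtain ⟨q, hq0, hqx⟩ := rationalize N S.card S c (w - w₀) le_rfl (fun v _ => hc0 v) hcx
  -- 3. split into integer and fractional parts
  set a : (Fin N → ℤ) → ℕ := fun v => (⌊q v⌋).toNat with hadef
  have haq : ∀ v, ((a v : ℚ)) = (⌊q v⌋ : ℚ) := by
    intro v
    have : ((a v : ℤ)) = ⌊q v⌋ := Int.toNat_of_nonneg (Int.floor_nonneg.mpr (hq0 v))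
    exact_mod_cast this
  set r : (Fin N → ℤ) → ℚ := fun v => q v - (a v : ℚ) with hrdef
  have hr0 : ∀ v, 0 ≤ r v := by
    intro v
    simp only [hrdef, haq, sub_nonneg]
    exact Int.floor_le _
  have hr1 : ∀ v, r v ≤ 1 := by
    intro v
    simp only [hrdef, haq]
    have := Int.lt_floor_add_one (q v)
    linarith
  set y : Fin N → ℤ := ∑ v ∈ S, a v • v with hydef
  have hyK : y ∈ K := sum_mem (fun v hv => nsmul_mem (hSK v hv) _)
  set u : Fin N → ℤ := w - w₀ - y with hudef
  have huG : u ∈ G := by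
    refine sub_mem (sub_mem hwG ?_) ?_
    · exact AddSubgroup.subset_closure hw₀K
    · exact AddSubgroup.subset_closure hyK
  have huq : ∀ i, ((u i : ℚ)) = ∑ v ∈ S, r v * (v i : ℚ) := by
    intro i
    have hwq : (((w - w₀) i : ℤ) : ℚ) = ∑ v ∈ S, q v * (v i : ℚ) := by
      have := congrFun hqx i
      simpa [Finset.sum_apply] using this
    have hyq : ((y i : ℤ) : ℚ) = ∑ v ∈ S, (a v : ℚ) * (v i : ℚ) := by
      have hyi : y i = ∑ v ∈ S, (a v : ℤ) * v i := by
        rw [hydef, Finset.sum_apply]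
        exact Finset.sum_congr rfl fun v _ => by rw [Pi.smul_apply, nsmul_eq_mul]
      rw [hyi]
      push_cast
      rfl
    have : (u i : ℚ) = ((w - w₀) i : ℚ) - (y i : ℚ) := by
      simp only [hudef, Pi.sub_apply]
      push_cast
      ring
    rw [this, hwq, hyq, ← Finset.sum_sub_distrib]
    exact Finset.sum_congr rfl fun v _ => by rw [hrdef]; ring
  have hub : ∀ i, |u i| ≤ Mb i := by
    intro i
    have hQ : |(u i : ℚ)| ≤ ((Mb i : ℤ) : ℚ) := by
      rw [huq i]
      calc |∑ v ∈ S, r v * (v i : ℚ)| ≤ ∑ v ∈ S, |r v * (v i : ℚ)| :=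
            Finset.abs_sum_le_sum_abs _ _
        _ ≤ ∑ v ∈ S, |(v i : ℚ)| := by
            refine Finset.sum_le_sum fun v _ => ?_
            rw [abs_mul, abs_of_nonneg (hr0 v)]
            exact mul_le_of_le_one_left (abs_nonneg _) (hr1 v)
        _ = ((Mb i : ℤ) : ℚ) := by
            simp only [hMbdef]
            push_cast
            rfl
    exact_mod_cast hQ
  have huT : u ∈ T := by
    rw [hTdef, Finset.mem_Icc]
    constructor
    · intro i
      have := (abs_le.mp (hub i)).1
      simpa using this
    · intro i
      exact (abs_le.mp (hub i)).2
  have huF : u ∈ F := by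
    rw [hFdef, Finset.mem_filter]
    exact ⟨huT, huG⟩
  have hsplit : f u + ∑ u' ∈ F.erase u, f u' = w₀ := Finset.add_sum_erase F f huF
  have hw : w = (u + f u) + (∑ u' ∈ F.erase u, f u') + y := by
    have h2 : (u + f u) + (∑ u' ∈ F.erase u, f u') + y = u + w₀ + y := by
      rw [← hsplit]; abel
    rw [h2, hudef]
    abel
  rw [hw]
  exact add_mem (add_mem (hfadd u huG) (sum_mem fun u' _ => hfK u')) hyK
end

section
/- Let K be an additive submonoid of ℤ^N all of whose elements have nonnegative coordinates (i.e. K ⊆ ℤ≥0^N). Then there exists a constant C > 0, depending only on K, such that for all ξ₁, ξ₂ ∈ K there exist η₁, η₂ ∈ K with ξ₁ + η₁ = ξ₂ + η₂ and ‖η₁‖ ≤ C‖ξ₁ − ξ₂‖ and ‖η₂‖ ≤ C‖ξ₁ − ξ₂‖, where ‖·‖ denotes the Euclidean norm on ℤ^N ⊆ ℝ^N. (K is not assumed to be finitely generated.) -/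
/-- The Euclidean norm of an integer vector, computed via the inclusion `ℤ^N ⊆ ℝ^N`. -/
noncomputable def euclNormZ (N : ℕ) (v : Fin N → ℤ) : ℝ :=
  Real.sqrt (∑ i, ((v i : ℝ)) ^ 2)

/-- The inclusion of `ℤ^N` into `EuclideanSpace ℝ (Fin N)` as an additive hom. -/
noncomputable def iE (N : ℕ) : (Fin N → ℤ) →+ EuclideanSpace ℝ (Fin N) where
  toFun v := WithLp.toLp 2 (fun i => (v i : ℝ))
  map_zero' := by ext i; simp
  map_add' x y := by
    show _ = (_ : EuclideanSpace ℝ (Fin N)) + _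
    ext i
    show ((x i + y i : ℤ) : ℝ) = _
    push_cast
    rfl

lemma euclNormZ_eq_norm (N : ℕ) (v : Fin N → ℤ) : euclNormZ N v = ‖iE N v‖ := by
  rw [EuclideanSpace.norm_eq]
  unfold euclNormZ
  congr 1
  refine Finset.sum_congr rfl fun i _ => ?_
  rw [Real.norm_eq_abs, sq_abs]
  rfl

lemma euclNormZ_nonneg (N : ℕ) (v : Fin N → ℤ) : 0 ≤ euclNormZ N v :=
  Real.sqrt_nonneg _

lemma euclNormZ_sum_le {α : Type*} (N : ℕ) (s : Finset α) (f : α → Fin N → ℤ) :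
    euclNormZ N (∑ j ∈ s, f j) ≤ ∑ j ∈ s, euclNormZ N (f j) := by
  simp_rw [euclNormZ_eq_norm, map_sum]
  exact norm_sum_le _ _

lemma euclNormZ_add_le (N : ℕ) (x y : Fin N → ℤ) :
    euclNormZ N (x + y) ≤ euclNormZ N x + euclNormZ N y := by
  simp_rw [euclNormZ_eq_norm, map_add]
  exact norm_add_le _ _

lemma euclNormZ_nsmul (N : ℕ) (m : ℕ) (x : Fin N → ℤ) :
    euclNormZ N (m • x) = (m : ℝ) * euclNormZ N x := by
  simp_rw [euclNormZ_eq_norm, AddMonoidHom.map_nsmul]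
  rw [← Nat.cast_smul_eq_nsmul ℝ, norm_smul]
  simp

lemma abs_coord_le (N : ℕ) (v : Fin N → ℤ) (i : Fin N) :
    |(v i : ℝ)| ≤ euclNormZ N v := by
  rw [← Real.sqrt_sq_eq_abs]
  apply Real.sqrt_le_sqrt
  exact Finset.single_le_sum (f := fun i => ((v i : ℝ))^2) (fun j _ => sq_nonneg _)
    (Finset.mem_univ i)


set_option maxHeartbeats 1000000 in
/-- For any cone `K ⊆ ℤ_{≥0}^N` (not necessarily finitely generated) there is a
constant `C > 0` depending only on `K` such that for all `ξ₁, ξ₂ ∈ K` there exist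
`η₁, η₂ ∈ K` with `ξ₁ + η₁ = ξ₂ + η₂` and `‖η₁‖, ‖η₂‖ ≤ C‖ξ₁ - ξ₂‖`. -/
theorem cone_double_prop (N : ℕ) (K : AddSubmonoid (Fin N → ℤ))
    (hK : ∀ ξ ∈ K, ∀ i, 0 ≤ ξ i) :
    ∃ C : ℝ, 0 < C ∧ ∀ ξ₁ ∈ K, ∀ ξ₂ ∈ K, ∃ η₁ ∈ K, ∃ η₂ ∈ K,
      ξ₁ + η₁ = ξ₂ + η₂ ∧
      euclNormZ N η₁ ≤ C * euclNormZ N (ξ₁ - ξ₂) ∧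
      euclNormZ N η₂ ≤ C * euclNormZ N (ξ₁ - ξ₂) := by
  classical
  -- the group of differences, as an `AddSubgroup`
  set G : AddSubgroup (Fin N → ℤ) :=
    { carrier := {x | ∃ a ∈ K, ∃ b ∈ K, a - b = x}
      zero_mem' := ⟨0, K.zero_mem, 0, K.zero_mem, by simp⟩
      add_mem' := by
        rintro x y ⟨a, ha, b, hb, rfl⟩ ⟨c, hc, d, hd, rfl⟩
        exact ⟨a + c, K.add_mem ha hc, b + d, K.add_mem hb hd, by abel⟩
      neg_mem' := by
        rintro x ⟨a, ha, b, hb, rfl⟩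
        exact ⟨b, hb, a, ha, by abel⟩ } with hGdef
  set M : Submodule ℤ (Fin N → ℤ) := G.toIntSubmodule with hMdef
  obtain ⟨n, bM⟩ := Submodule.basisOfPid (Pi.basisFun ℤ (Fin N)) M
  -- representatives of the basis vectors as differences of elements of K
  have hrep : ∀ j : Fin n, ∃ a ∈ K, ∃ b ∈ K, a - b = ((bM j : Fin N → ℤ)) :=
    fun j => (bM j).2
  choose a ha b hb hab using hrep
  -- the inclusion ℤ^N → ℚ^N
  let ιQ : (Fin N → ℤ) →ₗ[ℤ] (Fin N → ℚ) :=
    { toFun := fun v i => (v i : ℚ)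
      map_add' := by intro x y; funext i; push_cast; simp
      map_smul' := by intro z x; funext i; push_cast; simp }
  have hιQ : Function.Injective ιQ := by
    intro x y h
    funext i
    have h2 : ((x i : ℚ)) = ((y i : ℚ)) := congrFun h i
    exact_mod_cast h2
  -- the images of the basis vectors are ℚ-linearly independent
  have hw : LinearIndependent ℚ (fun j => ιQ ((bM j : Fin N → ℤ))) := by
    rw [← LinearIndependent.iff_fractionRing (R := ℤ)]
    exact bM.linearIndependent.map' (ιQ.comp M.subtype)
      (LinearMap.ker_eq_bot.mpr (hιQ.comp Subtype.val_injective))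
  let φ : (Fin n → ℚ) →ₗ[ℚ] (Fin N → ℚ) :=
    Fintype.linearCombination ℚ (fun j => ιQ ((bM j : Fin N → ℤ)))
  have hφker : LinearMap.ker φ = ⊥ := by
    rw [LinearMap.ker_eq_bot']
    intro c hc
    funext j
    exact Fintype.linearIndependent_iff.mp hw c hc j
  obtain ⟨g, hg⟩ := φ.exists_leftInverse_of_injective hφker
  -- the matrix of g
  set q : Fin n → Fin N → ℚ := fun j i => g (Pi.single i 1) j with hq
  -- key coordinate formula
  have key : ∀ (x : Fin N → ℤ) (hx : x ∈ M) (j : Fin n),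
      ((bM.repr ⟨x, hx⟩ j : ℚ)) = ∑ i, (x i : ℚ) * q j i := by
    intro x hx j
    have h2 := bM.sum_repr ⟨x, hx⟩
    have h1 : φ (fun j => ((bM.repr ⟨x, hx⟩ j : ℚ))) = ιQ x := by
      rw [Fintype.linearCombination_apply]
      calc ∑ j, ((bM.repr ⟨x, hx⟩ j : ℚ)) • ιQ ((bM j : Fin N → ℤ))
          = ∑ j, (ιQ.comp M.subtype) (bM.repr ⟨x, hx⟩ j • bM j) := by
            refine Finset.sum_congr rfl fun j _ => ?_
            rw [map_smul, ← Int.cast_smul_eq_zsmul ℚ]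
            rfl
        _ = (ιQ.comp M.subtype) (∑ j, bM.repr ⟨x, hx⟩ j • bM j) := (map_sum _ _ _).symm
        _ = ιQ x := by rw [h2]; rfl
    have h4 : (fun j => ((bM.repr ⟨x, hx⟩ j : ℚ))) = g (ιQ x) := by
      rw [← h1, ← LinearMap.comp_apply, hg, LinearMap.id_apply]
    have h5 : ιQ x = ∑ i, (x i : ℚ) • (Pi.single i (1 : ℚ) : Fin N → ℚ) := by
      funext k
      have e0 : ιQ x k = (x k : ℚ) := rfl
      rw [e0]
      simp [Pi.single_apply, Finset.sum_apply]
    have := congrFun h4 j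
    rw [this, h5, map_sum]
    simp [q, Finset.sum_apply]
  -- the coordinate bound
  set D : Fin n → ℝ := fun j => ∑ i, |(q j i : ℝ)| with hD
  have coordBound : ∀ (x : Fin N → ℤ) (hx : x ∈ M) (j : Fin n),
      |(bM.repr ⟨x, hx⟩ j : ℝ)| ≤ D j * euclNormZ N x := by
    intro x hx j
    have hk := key x hx j
    have hkr : ((bM.repr ⟨x, hx⟩ j : ℝ)) = ∑ i, (x i : ℝ) * ((q j i : ℚ) : ℝ) := by
      have := congrArg (fun t : ℚ => (t : ℝ)) hk
      push_cast at this
      exact this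
    rw [hkr]
    calc |∑ i, (x i : ℝ) * ((q j i : ℚ) : ℝ)| ≤ ∑ i, |(x i : ℝ) * ((q j i : ℚ) : ℝ)| :=
          Finset.abs_sum_le_sum_abs _ _
      _ ≤ ∑ i, euclNormZ N x * |((q j i : ℚ) : ℝ)| := by
          refine Finset.sum_le_sum fun i _ => ?_
          rw [abs_mul]
          exact mul_le_mul_of_nonneg_right (abs_coord_le N x i) (abs_nonneg _)
      _ = euclNormZ N x * ∑ i, |((q j i : ℚ) : ℝ)| := by rw [Finset.mul_sum]
      _ = D j * euclNormZ N x := mul_comm _ _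
  -- the constant
  set C₀ : ℝ := ∑ j, D j * (euclNormZ N (a j) + euclNormZ N (b j)) with hC₀
  refine ⟨max C₀ 1, lt_of_lt_of_le one_pos (le_max_right _ _), ?_⟩
  intro ξ₁ hξ₁ ξ₂ hξ₂
  have hδ : ξ₁ - ξ₂ ∈ M := ⟨ξ₁, hξ₁, ξ₂, hξ₂, rfl⟩
  set c : Fin n → ℤ := fun j => bM.repr ⟨ξ₁ - ξ₂, hδ⟩ j with hc
  refine ⟨∑ j, ((c j).toNat • b j + ((-(c j)).toNat • a j)), ?_,
          ∑ j, ((c j).toNat • a j + ((-(c j)).toNat • b j)), ?_, ?_, ?_, ?_⟩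
  · exact AddSubmonoid.sum_mem K fun j _ =>
      K.add_mem (AddSubmonoid.nsmul_mem K (hb j) _) (AddSubmonoid.nsmul_mem K (ha j) _)
  · exact AddSubmonoid.sum_mem K fun j _ =>
      K.add_mem (AddSubmonoid.nsmul_mem K (ha j) _) (AddSubmonoid.nsmul_mem K (hb j) _)
  · -- the equation
    have hsum : ∑ j, c j • ((bM j : Fin N → ℤ)) = ξ₁ - ξ₂ := by
      have h2 := bM.sum_repr ⟨ξ₁ - ξ₂, hδ⟩
      calc ∑ j, c j • ((bM j : Fin N → ℤ))
          = ((∑ j, bM.repr ⟨ξ₁ - ξ₂, hδ⟩ j • bM j : M) : Fin N → ℤ) := by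
            rw [Submodule.coe_sum]
            exact Finset.sum_congr rfl fun j _ => rfl
        _ = ξ₁ - ξ₂ := by rw [h2]
    have hdiff : (∑ j, ((c j).toNat • a j + ((-(c j)).toNat • b j))) -
        (∑ j, ((c j).toNat • b j + ((-(c j)).toNat • a j))) = ξ₁ - ξ₂ := by
      rw [← Finset.sum_sub_distrib, ← hsum]
      refine Finset.sum_congr rfl fun j _ => ?_
      have h6 : ((c j).toNat : ℤ) - ((-(c j)).toNat : ℤ) = c j := by omega
      calc ((c j).toNat • a j + ((-(c j)).toNat • b j)) -
            ((c j).toNat • b j + ((-(c j)).toNat • a j))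
          = (((c j).toNat : ℤ) - ((-(c j)).toNat : ℤ)) • (a j - b j) := by
            push_cast [sub_smul, smul_sub, natCast_zsmul]
            abel
        _ = c j • ((bM j : Fin N → ℤ)) := by rw [h6, hab j]
    have h7 := sub_eq_sub_iff_add_eq_add.mp hdiff
    rw [← h7]
    exact add_comm _ _
  all_goals {
    have main : ∀ (p r : Fin n → Fin N → ℤ),
        (∀ j, euclNormZ N (p j) + euclNormZ N (r j)
          = euclNormZ N (a j) + euclNormZ N (b j)) →
        euclNormZ N (∑ j, ((c j).toNat • p j + ((-(c j)).toNat • r j)))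
          ≤ max C₀ 1 * euclNormZ N (ξ₁ - ξ₂) := by
      intro p r hpr
      refine le_trans (euclNormZ_sum_le N Finset.univ _) ?_
      calc ∑ j, euclNormZ N ((c j).toNat • p j + ((-(c j)).toNat • r j))
          ≤ ∑ j, D j * (euclNormZ N (a j) + euclNormZ N (b j)) * euclNormZ N (ξ₁ - ξ₂) := by
            refine Finset.sum_le_sum fun j _ => ?_
            refine le_trans (euclNormZ_add_le N _ _) ?_
            rw [euclNormZ_nsmul, euclNormZ_nsmul]
            have h1 : (((c j).toNat : ℝ)) ≤ |(c j : ℝ)| := by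
              have e1 : ((c j).toNat : ℤ) ≤ |c j| := by rw [Int.abs_eq_natAbs]; omega
              calc ((c j).toNat : ℝ) = (((c j).toNat : ℤ) : ℝ) := by push_cast; ring
                _ ≤ ((|c j| : ℤ) : ℝ) := by exact_mod_cast e1
                _ = |(c j : ℝ)| := by push_cast; ring
            have h2 : ((((-(c j))).toNat : ℝ)) ≤ |(c j : ℝ)| := by
              have e1 : ((-(c j)).toNat : ℤ) ≤ |c j| := by rw [Int.abs_eq_natAbs]; omega
              calc ((-(c j)).toNat : ℝ) = (((-(c j)).toNat : ℤ) : ℝ) := by push_cast; ring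
                _ ≤ ((|c j| : ℤ) : ℝ) := by exact_mod_cast e1
                _ = |(c j : ℝ)| := by push_cast; ring
            have hp := euclNormZ_nonneg N (p j)
            have hr := euclNormZ_nonneg N (r j)
            have step1 : (((c j).toNat : ℝ)) * euclNormZ N (p j)
                + ((((-(c j))).toNat : ℝ)) * euclNormZ N (r j)
                ≤ |(c j : ℝ)| * (euclNormZ N (p j) + euclNormZ N (r j)) := by nlinarith
            rw [hpr j] at step1
            refine step1.trans ?_
            have hcb : |(c j : ℝ)| ≤ D j * euclNormZ N (ξ₁ - ξ₂) := coordBound _ hδ j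
            have habn : (0 : ℝ) ≤ euclNormZ N (a j) + euclNormZ N (b j) :=
              add_nonneg (euclNormZ_nonneg N _) (euclNormZ_nonneg N _)
            nlinarith
        _ = C₀ * euclNormZ N (ξ₁ - ξ₂) := by rw [hC₀, Finset.sum_mul]
        _ ≤ max C₀ 1 * euclNormZ N (ξ₁ - ξ₂) :=
            mul_le_mul_of_nonneg_right (le_max_left _ _) (euclNormZ_nonneg _ _)
    first
      | exact main b a (fun j => add_comm _ _)
      | exact main a b (fun j => rfl)
  }
end

section
/- Let a be an n×n complex matrix with ‖a − 1‖_op ≤ δ for some δ < 1, and suppose a = u·b where u is an n×n unitary matrix and b is an n×n positive semidefinite matrix (a polar decomposition of a). Then ‖u − 1‖_op ≤ 2δ. -/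
open scoped ComplexOrder Pointwise

/-- The ℓ²-operator norm of a complex `n × n` matrix, i.e. its norm as a linear
operator on `ℂⁿ` with the standard Hermitian inner product. -/
noncomputable def matOpNorm {n : ℕ} (a : Matrix (Fin n) (Fin n) ℂ) : ℝ :=
  ‖Matrix.toEuclideanCLM (𝕜 := ℂ) a‖

set_option maxHeartbeats 1000000 in
set_option synthInstance.maxHeartbeats 400000 in
/-- If `‖a - 1‖_op ≤ δ < 1` and `a = u * b` is a polar decomposition (`u` unitary,
`b` positive semidefinite), then `‖u - 1‖_op ≤ 2δ`. -/
theorem polar_part_close_to_one {n : ℕ} (δ : ℝ) (hδ : δ < 1)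
    (a u b : Matrix (Fin n) (Fin n) ℂ)
    (ha : matOpNorm (a - 1) ≤ δ)
    (hu : u ∈ Matrix.unitaryGroup (Fin n) ℂ)
    (hb : b.PosSemidef)
    (hab : a = u * b) :
    matOpNorm (u - 1) ≤ 2 * δ := by
  have hδ0 : 0 ≤ δ := le_trans (norm_nonneg _) ha
  unfold matOpNorm at ha ⊢
  set T := Matrix.toEuclideanCLM (𝕜 := ℂ) (n := Fin n) with hT
  set A := T a with hAdef
  set U := T u with hUdef
  set B := T b with hBdef
  have hUB : A = U * B := by rw [hAdef, hab, map_mul]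
  have hUu : U ∈ unitary (EuclideanSpace ℂ (Fin n) →L[ℂ] EuclideanSpace ℂ (Fin n)) := by
    constructor
    · rw [hUdef, ← map_star, ← map_mul, hu.1, map_one]
    · rw [hUdef, ← map_star, ← map_mul, hu.2, map_one]
  have hAnorm : ‖A - 1‖ ≤ δ := by
    rw [hAdef, ← map_one T, ← map_sub]; exact ha
  -- eigenvalue bound
  have eigbound : ∀ j, |hb.1.eigenvalues j - 1| ≤ δ := by
    intro j
    set v := hb.1.eigenvectorBasis j with hv
    set lam := hb.1.eigenvalues j with hlam
    have hlam0 : 0 ≤ lam := hb.eigenvalues_nonneg j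
    have hv1 : ‖v‖ = 1 := hb.1.eigenvectorBasis.orthonormal.1 j
    have hBv : B v = (lam : ℂ) • v := by
      have h1 : B v = Matrix.toEuclideanLin b v := rfl
      rw [h1, Matrix.toEuclideanLin_apply]
      have h2 := hb.1.mulVec_eigenvectorBasis j
      ext i
      have := congrFun h2 i
      simpa using this
    have hAv : A v = (lam : ℂ) • (U v) := by
      rw [hUB, ContinuousLinearMap.mul_apply, hBv, map_smul]
    have hUv : ‖U v‖ = 1 := by
      rw [ContinuousLinearMap.norm_map_of_mem_unitary hUu, hv1]
    have hAvn : ‖A v‖ = lam := by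
      rw [hAv, norm_smul, hUv, mul_one, Complex.norm_real, Real.norm_of_nonneg hlam0]
    calc |lam - 1| = |‖A v‖ - ‖v‖| := by rw [hAvn, hv1]
      _ ≤ ‖A v - v‖ := abs_norm_sub_norm_le _ _
      _ = ‖(A - 1) v‖ := by simp
      _ ≤ ‖A - 1‖ * ‖v‖ := (A - 1).le_opNorm v
      _ ≤ δ := by rw [hv1, mul_one]; exact hAnorm
  -- spectrum bound
  have key : ∀ z ∈ spectrum ℂ (B - 1), ‖z‖ ≤ δ := by
    intro z hz
    have hz' : z ∈ spectrum ℂ B - ({1} : Set ℂ) := by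
      rw [spectrum.sub_singleton_eq]
      simpa using hz
    obtain ⟨μ, hμ, y, hy, rfl⟩ := Set.mem_sub.mp hz'
    rw [Set.mem_singleton_iff] at hy
    subst hy
    have hμb : μ ∈ spectrum ℂ b := by
      rwa [hBdef, AlgEquiv.spectrum_eq] at hμ
    have hsb : IsSelfAdjoint B := by
      rw [IsSelfAdjoint, hBdef, ← map_star]
      exact congrArg T hb.1
    have hre : μ = (μ.re : ℂ) := hsb.mem_spectrum_eq_re hμ
    have hμr : μ.re ∈ spectrum ℝ b := by
      apply spectrum.of_algebraMap_mem ℂ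
      rwa [Complex.coe_algebraMap, ← hre]
    rw [Matrix.IsHermitian.spectrum_real_eq_range_eigenvalues hb.1] at hμr
    obtain ⟨j, hj⟩ := hμr
    have h3 : ‖μ - 1‖ = |μ.re - 1| := by
      rw [hre]
      rw [show ((μ.re : ℝ) : ℂ) - 1 = ((μ.re - 1 : ℝ) : ℂ) by push_cast; ring]
      rw [Complex.norm_real, Real.norm_eq_abs]
      simp
    rw [h3, ← hj]
    exact eigbound j
  have hsa : IsSelfAdjoint (B - 1) := by
    have hsb : IsSelfAdjoint B := by
      rw [IsSelfAdjoint, hBdef, ← map_star]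
      exact congrArg T hb.1
    have hstar : star (b - 1 : Matrix (Fin n) (Fin n) ℂ) = b - 1 := by
      rw [star_sub, star_one]
      rw [show star b = b from hb.1]
    rw [IsSelfAdjoint, hBdef, ← map_one T, ← map_sub, ← map_star, hstar]
  have hB1 : ‖B - 1‖ ≤ δ := by
    have hrad : spectralRadius ℂ (B - 1) ≤ (δ.toNNReal : ENNReal) := by
      refine iSup₂_le fun z hz => ?_
      refine ENNReal.coe_le_coe.mpr ?_
      rw [← Real.toNNReal_coe (r := ‖z‖₊)]
      simpa using Real.toNNReal_mono (key z hz)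
    rw [hsa.spectralRadius_eq_nnnorm] at hrad
    have h2 : ‖B - 1‖₊ ≤ δ.toNNReal := ENNReal.coe_le_coe.mp hrad
    calc ‖B - 1‖ = (‖B - 1‖₊ : ℝ) := rfl
      _ ≤ (δ.toNNReal : ℝ) := by exact_mod_cast h2
      _ = δ := Real.coe_toNNReal δ hδ0
  have goal : ‖U - 1‖ ≤ 2 * δ := by
    have hdecomp : U - 1 = U * (1 - B) + (A - 1) := by
      rw [hUB, mul_sub, mul_one, sub_add_sub_cancel]
    calc ‖U - 1‖ = ‖U * (1 - B) + (A - 1)‖ := by rw [hdecomp]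
      _ ≤ ‖U * (1 - B)‖ + ‖A - 1‖ := norm_add_le _ _
      _ = ‖1 - B‖ + ‖A - 1‖ := by rw [CStarRing.norm_mem_unitary_mul _ hUu]
      _ ≤ δ + δ := add_le_add (by rw [norm_sub_rev]; exact hB1) hAnorm
      _ = 2 * δ := by ring
  calc ‖T (u - 1)‖ = ‖U - 1‖ := by rw [map_sub, map_one, hUdef]
    _ ≤ 2 * δ := goal
end

section
/- For every n×n complex matrix b there exists an n×n unitary matrix w such that ‖b − w‖_F ≤ ‖b*b − 1‖_F, where b* denotes the conjugate transpose and 1 the identity matrix. (The matrix w can be taken to be uv, where b = uσv is a singular value decomposition of b.) -/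
open Matrix

/-- The (unnormalized) Frobenius (Hilbert–Schmidt) norm of a complex `n × n`
matrix: `‖A‖_F = (Tr(A*A))^{1/2}`. -/
noncomputable def frobNorm {n : ℕ} (A : Matrix (Fin n) (Fin n) ℂ) : ℝ :=
  Real.sqrt (Matrix.trace (Aᴴ * A)).re

open ComplexOrder in
/-- The real part of the trace of a positive semidefinite matrix is nonnegative. -/
lemma FrobAux.trace_re_nonneg {n : ℕ} {A : Matrix (Fin n) (Fin n) ℂ} (hA : A.PosSemidef) :
    0 ≤ (Matrix.trace A).re := by
  rw [Matrix.trace, Complex.re_sum]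
  refine Finset.sum_nonneg fun i _ => ?_
  have h := hA.re_dotProduct_nonneg (Pi.single i 1)
  simpa [Matrix.mulVec_single, dotProduct, Pi.single_apply, Matrix.diag] using h

open ComplexOrder MatrixOrder in
/-- The real part of the trace of a product of positive semidefinite matrices is
nonnegative. -/
lemma FrobAux.trace_mul_re_nonneg {n : ℕ} {A B : Matrix (Fin n) (Fin n) ℂ}
    (hA : A.PosSemidef) (hB : B.PosSemidef) : 0 ≤ (Matrix.trace (A * B)).re := by
  have h1 : Matrix.trace (A * B) = Matrix.trace (CFC.sqrt A * B * CFC.sqrt A) :=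
    calc Matrix.trace (A * B) = Matrix.trace (CFC.sqrt A * CFC.sqrt A * B) := by
          rw [CFC.sqrt_mul_sqrt_self A hA.nonneg]
      _ = Matrix.trace (CFC.sqrt A * B * CFC.sqrt A) :=
          (Matrix.trace_mul_cycle (CFC.sqrt A) B (CFC.sqrt A)).symm
  have h2 : (CFC.sqrt A * B * CFC.sqrt A).PosSemidef := by
    have := hB.conjTranspose_mul_mul_same (CFC.sqrt A)
    rwa [(CFC.sqrt_nonneg A).posSemidef.isHermitian.eq] at this
  rw [h1]
  exact FrobAux.trace_re_nonneg h2

open ComplexOrder in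
/-- Key scalar-free inequality: for a positive semidefinite `p`,
`‖p - 1‖_F ≤ ‖p² - 1‖_F`. -/
lemma FrobAux.key {n : ℕ} {p : Matrix (Fin n) (Fin n) ℂ} (hp : p.PosSemidef) :
    frobNorm (p - 1) ≤ frobNorm (p * p - 1) := by
  have hX : (p - 1)ᴴ = p - 1 := by
    rw [conjTranspose_sub, hp.isHermitian.eq, conjTranspose_one]
  have hY : (p * p - 1)ᴴ = p * p - 1 := by
    rw [conjTranspose_sub, conjTranspose_mul, hp.isHermitian.eq, conjTranspose_one]
  unfold frobNorm
  apply Real.sqrt_le_sqrt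
  rw [hX, hY]
  have hid : (p * p - 1) * (p * p - 1) - (p - 1) * (p - 1)
      = ((p - 1) * (p - 1)) * (p * p + (p + p)) := by noncomm_ring
  have h1 : ((p - 1) * (p - 1)).PosSemidef := by
    have := Matrix.posSemidef_conjTranspose_mul_self (p - 1)
    rwa [hX] at this
  have h2 : (p * p + (p + p)).PosSemidef := by
    have hpp : (p * p).PosSemidef := by
      have := hp.pow 2; rwa [pow_two] at this
    exact hpp.add (hp.add hp)
  have h3 := FrobAux.trace_mul_re_nonneg h1 h2
  rw [← hid, Matrix.trace_sub, Complex.sub_re] at h3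
  linarith

open ComplexOrder MatrixOrder in
/-- The theorem in the case of an invertible matrix, via the polar
decomposition `b = w · √(bᴴb)`. -/
lemma FrobAux.invertible_case {n : ℕ} {b : Matrix (Fin n) (Fin n) ℂ} (hb : IsUnit b.det) :
    ∃ w ∈ Matrix.unitaryGroup (Fin n) ℂ, frobNorm (b - w) ≤ frobNorm (bᴴ * b - 1) := by
  have hpsd := Matrix.posSemidef_conjTranspose_mul_self b
  set p := CFC.sqrt (bᴴ * b) with hpdef
  have hpp : p * p = bᴴ * b := CFC.sqrt_mul_sqrt_self _ hpsd.nonneg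
  have hP : pᴴ = p := (CFC.sqrt_nonneg (bᴴ * b)).posSemidef.isHermitian.eq
  have hdet : IsUnit p.det := by
    have h1 : IsUnit ((bᴴ * b).det) := by
      rw [Matrix.det_mul, Matrix.det_conjTranspose]
      exact (hb.star).mul hb
    rw [← hpp, Matrix.det_mul] at h1
    exact isUnit_of_mul_isUnit_left h1
  have hinv1 : p⁻¹ * p = 1 := Matrix.nonsing_inv_mul p hdet
  have hinv2 : p * p⁻¹ = 1 := Matrix.mul_nonsing_inv p hdet
  have hPinv : (p⁻¹)ᴴ = p⁻¹ := by
    rw [Matrix.conjTranspose_nonsing_inv, hP]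
  set w := b * p⁻¹ with hwdef
  have hww : wᴴ * w = 1 := by
    rw [hwdef, Matrix.conjTranspose_mul, hPinv]
    calc p⁻¹ * bᴴ * (b * p⁻¹) = p⁻¹ * (bᴴ * b) * p⁻¹ := by
          rw [Matrix.mul_assoc, Matrix.mul_assoc, Matrix.mul_assoc]
      _ = p⁻¹ * (p * p) * p⁻¹ := by rw [hpp]
      _ = 1 := by
          rw [← Matrix.mul_assoc, hinv1, Matrix.one_mul, hinv2]
  refine ⟨w, ?_, ?_⟩
  · rw [Matrix.mem_unitaryGroup_iff']
    rwa [Matrix.star_eq_conjTranspose]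
  · have hbw : b - w = w * (p - 1) := by
      rw [Matrix.mul_sub, Matrix.mul_one, hwdef, Matrix.mul_assoc, hinv1, Matrix.mul_one]
    have hM : (b - w)ᴴ * (b - w) = (p - 1)ᴴ * (p - 1) := by
      rw [hbw, Matrix.conjTranspose_mul, Matrix.mul_assoc, ← Matrix.mul_assoc wᴴ w, hww,
        Matrix.one_mul]
    have heq : frobNorm (b - w) = frobNorm (p - 1) := by
      unfold frobNorm; rw [hM]
    rw [heq, ← hpp]
    exact FrobAux.key (CFC.sqrt_nonneg (bᴴ * b)).posSemidef

/-- The unitary group is a compact subset of matrix space. -/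
lemma FrobAux.unitary_isCompact {n : ℕ} :
    IsCompact (Matrix.unitaryGroup (Fin n) ℂ : Set (Matrix (Fin n) (Fin n) ℂ)) := by
  have hball : IsCompact {A : Matrix (Fin n) (Fin n) ℂ | ∀ i j, ‖A i j‖ ≤ 1} := by
    have h : IsCompact ((Set.univ : Set (Fin n)).pi fun _ =>
        (Set.univ : Set (Fin n)).pi fun _ => Metric.closedBall (0:ℂ) 1) :=
      isCompact_univ_pi fun _ => isCompact_univ_pi fun _ => isCompact_closedBall 0 1
    have heq : ((Set.univ : Set (Fin n)).pi fun _ =>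
        (Set.univ : Set (Fin n)).pi fun _ => Metric.closedBall (0:ℂ) 1)
        = {A : Fin n → Fin n → ℂ | ∀ i j, ‖A i j‖ ≤ 1} := by
      ext A
      constructor
      · intro hA i j
        simpa [Complex.dist_eq] using hA i (Set.mem_univ i) j (Set.mem_univ j)
      · intro hA i _ j _
        simpa [Complex.dist_eq] using hA i j
    rw [heq] at h
    exact h
  refine hball.of_isClosed_subset ?_ ?_
  · have hcont : Continuous fun A : Matrix (Fin n) (Fin n) ℂ => Aᴴ * A :=
      Continuous.matrix_mul continuous_id.matrix_conjTranspose continuous_id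
    have : (Matrix.unitaryGroup (Fin n) ℂ : Set (Matrix (Fin n) (Fin n) ℂ)) =
        (fun A : Matrix (Fin n) (Fin n) ℂ => Aᴴ * A) ⁻¹' {1} := by
      ext A
      simp [Matrix.mem_unitaryGroup_iff', Matrix.star_eq_conjTranspose]
    rw [this]
    exact IsClosed.preimage hcont isClosed_singleton
  · intro U hU
    have h1 : Uᴴ * U = 1 := by
      rw [← Matrix.star_eq_conjTranspose]
      exact Matrix.mem_unitaryGroup_iff'.mp hU
    have habs : ∀ i j, ‖U i j‖ ≤ 1 := by
      intro i j
      have hdiag : (Uᴴ * U) j j = 1 := by rw [h1]; simp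
      rw [Matrix.mul_apply] at hdiag
      have hre : ∑ k, Complex.normSq (U k j) = 1 := by
        have := congrArg Complex.re hdiag
        rw [Complex.re_sum] at this
        simpa [Matrix.conjTranspose_apply, Complex.mul_conj', Complex.normSq_apply] using this
      have hle : Complex.normSq (U i j) ≤ 1 := by
        rw [← hre]
        exact Finset.single_le_sum (f := fun k => Complex.normSq (U k j))
          (fun k _ => Complex.normSq_nonneg _) (Finset.mem_univ i)
      rw [← Complex.sq_norm] at hle
      nlinarith [norm_nonneg (U i j)]
    exact habs

/-- Invertible perturbations of any matrix exist arbitrarily close to it. -/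
lemma FrobAux.exists_invertible_perturb {n : ℕ} (b : Matrix (Fin n) (Fin n) ℂ) {ε : ℝ}
    (hε : 0 < ε) : ∃ t : ℝ, 0 < t ∧ t < ε ∧ IsUnit (b + (t : ℂ) • 1).det := by
  have hfin : Set.Finite {t : ℝ | ((t : ℂ)) ∈ spectrum ℂ (-b)} := by
    apply Set.Finite.preimage (Function.Injective.injOn Complex.ofReal_injective)
    exact Matrix.finite_spectrum (-b)
  have hinf : Set.Infinite (Set.Ioo (0:ℝ) ε) :=
    Set.infinite_coe_iff.mp (Set.Ioo.infinite hε)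
  obtain ⟨t, ht⟩ := (hinf.diff hfin).nonempty
  refine ⟨t, ht.1.1, ht.1.2, ?_⟩
  rw [← Matrix.isUnit_iff_isUnit_det]
  have hns : (t : ℂ) ∉ spectrum ℂ (-b) := ht.2
  rw [spectrum.notMem_iff] at hns
  have : (algebraMap ℂ (Matrix (Fin n) (Fin n) ℂ)) (t : ℂ) - (-b) = b + (t : ℂ) • 1 := by
    rw [Algebra.algebraMap_eq_smul_one]
    abel
  rwa [this] at hns

/-- The Frobenius norm is a continuous function of the matrix. -/
lemma FrobAux.frob_continuous {n : ℕ} : Continuous (frobNorm (n := n)) := by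
  unfold frobNorm
  exact Real.continuous_sqrt.comp (Complex.continuous_re.comp
    ((continuous_id.matrix_conjTranspose.matrix_mul continuous_id).matrix_trace))

/-- Every complex square matrix `b` is within `‖b*b - 1‖_F` of a unitary matrix
in the Frobenius norm. -/
theorem close_to_a_unitary {n : ℕ} (b : Matrix (Fin n) (Fin n) ℂ) :
    ∃ w ∈ Matrix.unitaryGroup (Fin n) ℂ, frobNorm (b - w) ≤ frobNorm (bᴴ * b - 1) := by
  letI : FirstCountableTopology (Matrix (Fin n) (Fin n) ℂ) :=
    inferInstanceAs (FirstCountableTopology (Fin n → Fin n → ℂ))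
  have hchoice : ∀ k : ℕ, ∃ t : ℝ, 0 < t ∧ t < 1 / (k + 1) ∧
      IsUnit (b + (t : ℂ) • 1).det :=
    fun k => FrobAux.exists_invertible_perturb b (by positivity)
  choose t ht0 ht1 htu using hchoice
  have hcb : Filter.Tendsto (fun k => b + (t k : ℂ) • (1 : Matrix (Fin n) (Fin n) ℂ))
      Filter.atTop (nhds b) := by
    have htt : Filter.Tendsto t Filter.atTop (nhds 0) := by
      apply squeeze_zero (fun k => (ht0 k).le) (fun k => (ht1 k).le)
      exact tendsto_one_div_add_atTop_nhds_zero_nat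
    have htc : Filter.Tendsto (fun k => ((t k : ℂ))) Filter.atTop (nhds 0) := by
      simpa [Function.comp_def] using (Complex.continuous_ofReal.tendsto 0).comp htt
    have hmap : Continuous fun z : ℂ => b + z • (1 : Matrix (Fin n) (Fin n) ℂ) :=
      continuous_const.add (continuous_id.smul continuous_const)
    have := (hmap.tendsto 0).comp htc
    simpa [Function.comp_def] using this
  choose w hw hle using fun k => FrobAux.invertible_case (htu k)
  obtain ⟨g, hg, φ, hφ, hgt⟩ := FrobAux.unitary_isCompact.tendsto_subseq hw
  refine ⟨g, hg, ?_⟩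
  have hc' : Filter.Tendsto (fun k => b + (t (φ k) : ℂ) • (1 : Matrix (Fin n) (Fin n) ℂ))
      Filter.atTop (nhds b) := hcb.comp hφ.tendsto_atTop
  have h1 : Filter.Tendsto
      (fun k => frobNorm ((b + (t (φ k) : ℂ) • 1) - w (φ k)))
      Filter.atTop (nhds (frobNorm (b - g))) := by
    have hsub : Filter.Tendsto
        (fun k => (b + (t (φ k) : ℂ) • (1 : Matrix (Fin n) (Fin n) ℂ)) - w (φ k))
        Filter.atTop (nhds (b - g)) := hc'.sub hgt
    exact (FrobAux.frob_continuous.tendsto _).comp hsub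
  have h2 : Filter.Tendsto
      (fun k => frobNorm ((b + (t (φ k) : ℂ) • 1)ᴴ * (b + (t (φ k) : ℂ) • 1) - 1))
      Filter.atTop (nhds (frobNorm (bᴴ * b - 1))) := by
    have hmul : Continuous fun A : Matrix (Fin n) (Fin n) ℂ => Aᴴ * A - 1 :=
      (continuous_id.matrix_conjTranspose.matrix_mul continuous_id).sub continuous_const
    exact ((FrobAux.frob_continuous.comp hmul).tendsto b).comp hc'
  exact le_of_tendsto_of_tendsto' h1 h2 (fun k => hle (φ k))
end

section
/- Let H be a finite group, let X be a finite set, and let φ₁, φ₂ : H → Sym(X) be two group homomorphisms into the symmetric group of X which are conjugate, i.e. there exists a permutation s of X with s·φ₂(h)·s⁻¹ = φ₁(h) for all h ∈ H. Then there exists a permutation t of X such that t·φ₂(h)·t⁻¹ = φ₁(h) for all h ∈ H and |{x ∈ X : t(x) ≠ x}| ≤ Σ_{h ∈ H} |{x ∈ X : φ₁(h)(x) ≠ φ₂(h)(x)}|. In particular, the number of points moved by t is at most |H| times the maximum over h ∈ H of |{x ∈ X : φ₁(h)(x) ≠ φ₂(h)(x)}|. -/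
open Function

private lemma ncard_biUnion_le' {ι X : Type} [Finite X] (s : Finset ι) (f : ι → Set X) :
    (⋃ i ∈ s, f i).ncard ≤ ∑ i ∈ s, (f i).ncard := by
  classical
  induction s using Finset.induction with
  | empty => simp
  | @insert a s ha ih =>
    rw [Finset.set_biUnion_insert, Finset.sum_insert ha]
    exact le_trans (Set.ncard_union_le _ _) (by gcongr)

/-- **The conjugator argument for permutations.** If two actions of a finite group
`H` on a finite set `X` are conjugate, then they are conjugate by a permutation `t`
moving at most `Σ_{h ∈ H} |{x : φ₁(h)(x) ≠ φ₂(h)(x)}|` points. -/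
theorem conjugator_argument_perm
    (H : Type) [Group H] [Fintype H] (X : Type) [Fintype X]
    (φ₁ φ₂ : H →* Equiv.Perm X)
    (hconj : ∃ s : Equiv.Perm X, ∀ h : H, s * φ₂ h * s⁻¹ = φ₁ h) :
    ∃ t : Equiv.Perm X,
      (∀ h : H, t * φ₂ h * t⁻¹ = φ₁ h) ∧
      {x : X | t x ≠ x}.ncard ≤ ∑ h : H, {x : X | φ₁ h x ≠ φ₂ h x}.ncard := by
  classical
  obtain ⟨s, hs⟩ := hconj
  -- basic conjugation pointwise
  have hs' : ∀ (h : H) (x : X), s (φ₂ h x) = φ₁ h (s x) := by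
    intro h x
    have := hs h
    rw [mul_inv_eq_iff_eq_mul] at this
    have := congrArg (fun p : Equiv.Perm X => p x) this
    simpa using this
  set A : Set X := {x | ∀ h : H, φ₁ h x = φ₂ h x} with hAdef
  have hA1 : ∀ (h : H) (x : X), x ∈ A → φ₁ h x ∈ A := by
    intro h x hx g
    have h1 : φ₁ h x = φ₂ h x := hx h
    have h2 : φ₁ (g * h) x = φ₂ (g * h) x := hx (g * h)
    simp only [map_mul, Equiv.Perm.mul_apply] at h2
    rw [h1]
    rw [h1] at h2
    exact h2
  have hA2 : ∀ (h : H) (x : X), x ∈ A → φ₂ h x ∈ A := by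
    intro h x hx
    have := hA1 h x hx
    rwa [hx h] at this
  have hB1 : ∀ (h : H) (x : X), x ∉ A → φ₁ h x ∉ A := by
    intro h x hx hmem
    apply hx
    have := hA1 h⁻¹ _ hmem
    simpa [← Equiv.Perm.mul_apply, ← map_mul] using this
  have hB2 : ∀ (h : H) (x : X), x ∉ A → φ₂ h x ∉ A := by
    intro h x hx hmem
    apply hx
    have := hA2 h⁻¹ _ hmem
    simpa [← Equiv.Perm.mul_apply, ← map_mul] using this
  -- existence of first return
  have hex : ∀ x : X, x ∉ A → ∃ n, 0 < n ∧ s^[n] x ∉ A := by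
    intro x hx
    refine ⟨orderOf s, orderOf_pos s, ?_⟩
    rw [Equiv.Perm.iterate_eq_pow, pow_orderOf_eq_one]
    simpa using hx
  -- the first-return function
  set f : X → X := fun x =>
    if hx : x ∉ A then s^[Nat.find (hex x hx)] x else x with hfdef
  have hfA : ∀ x ∈ A, f x = x := by
    intro x hx
    simp [hfdef, hx]
  have hfB : ∀ (x : X) (hx : x ∉ A), f x = s^[Nat.find (hex x hx)] x := by
    intro x hx
    simp [hfdef, hx]
  have hfB' : ∀ (x : X), x ∉ A → f x ∉ A := by
    intro x hx
    rw [hfB x hx]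
    exact (Nat.find_spec (hex x hx)).2
  -- key iteration lemma
  have key : ∀ (h : H) (x : X) (k : ℕ), 0 < k →
      (∀ j, 0 < j → j < k → s^[j] x ∈ A) → s^[k] (φ₂ h x) = φ₁ h (s^[k] x) := by
    intro h x k
    induction k with
    | zero => intro hk; exact absurd hk (by simp)
    | succ k ih =>
      intro _ hmem
      rcases Nat.eq_zero_or_pos k with hk0 | hkpos
      · subst hk0
        simpa using hs' h x
      · have hA' : s^[k] x ∈ A := hmem k hkpos (Nat.lt_succ_self k)
        have h1 : s^[k] (φ₂ h x) = φ₁ h (s^[k] x) :=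
          ih hkpos (fun j hj hjk => hmem j hj (hjk.trans (Nat.lt_succ_self k)))
        rw [Function.iterate_succ_apply', Function.iterate_succ_apply', h1,
          hA' h, hs' h]
  -- equivariance of f
  have hf_eq : ∀ (h : H) (x : X), f (φ₂ h x) = φ₁ h (f x) := by
    intro h x
    by_cases hx : x ∈ A
    · rw [hfA x hx, hfA _ (hA2 h x hx), hx h]
    · have hx2 : φ₂ h x ∉ A := hB2 h x hx
      rw [hfB x hx, hfB _ hx2]
      set n := Nat.find (hex x hx) with hn
      have hnspec := Nat.find_spec (hex x hx)
      have hmin : ∀ j, 0 < j → j < n → s^[j] x ∈ A := by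
        intro j hj hjn
        by_contra hmem
        exact (Nat.find_min (hex x hx) hjn) ⟨hj, hmem⟩
      have hkey : s^[n] (φ₂ h x) = φ₁ h (s^[n] x) := key h x n hnspec.1 hmin
      have heq : Nat.find (hex _ hx2) = n := by
        apply le_antisymm
        · apply Nat.find_le
          exact ⟨hnspec.1, by rw [hkey]; exact hB1 h _ hnspec.2⟩
        · by_contra hlt
          push_neg at hlt
          have hspec2 := Nat.find_spec (hex _ hx2)
          set m := Nat.find (hex _ hx2) with hm
          have hmA : s^[m] x ∈ A := hmin m hspec2.1 hlt
          have : s^[m] (φ₂ h x) = φ₁ h (s^[m] x) :=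
            key h x m hspec2.1 (fun j hj hjm => hmin j hj (hjm.trans hlt))
          exact hspec2.2 (this ▸ hA1 h _ hmA)
      rw [heq, hkey]
  -- injectivity of f
  have hwlog : ∀ (x y : X) (hx : x ∉ A) (hy : y ∉ A),
      Nat.find (hex x hx) ≤ Nat.find (hex y hy) → f x = f y → x = y := by
    intro x y hx hy hle hxy
    set m := Nat.find (hex x hx) with hm
    set n := Nat.find (hex y hy) with hn
    rw [hfB x hx, hfB y hy, ← hm, ← hn] at hxy
    have hiter : s^[n] y = s^[m] (s^[n - m] y) := by
      rw [← Function.iterate_add_apply, Nat.add_sub_cancel' hle]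
    rw [hiter] at hxy
    have hxy' : x = s^[n - m] y := (s.injective.iterate m) hxy
    rcases Nat.eq_zero_or_pos (n - m) with h0 | hpos
    · rw [h0] at hxy'; simpa using hxy'
    · exfalso
      have hlt : n - m < n := by
        have := (Nat.find_spec (hex x hx)).1
        omega
      have : s^[n - m] y ∈ A := by
        by_contra hmem
        exact (Nat.find_min (hex y hy) hlt) ⟨hpos, hmem⟩
      rw [← hxy'] at this
      exact hx this
  have hinj : Function.Injective f := by
    intro x y hxy
    by_cases hx : x ∈ A <;> by_cases hy : y ∈ A
    · rw [hfA x hx, hfA y hy] at hxy; exact hxy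
    · exfalso; rw [hfA x hx] at hxy; exact hfB' y hy (hxy ▸ hx)
    · exfalso; rw [hfA y hy] at hxy; exact hfB' x hx (hxy.symm ▸ hy)
    · rcases le_total (Nat.find (hex x hx)) (Nat.find (hex y hy)) with hle | hle
      · exact hwlog x y hx hy hle hxy
      · exact (hwlog y x hy hx hle hxy.symm).symm
  have hbij : Function.Bijective f := Finite.injective_iff_bijective.mp hinj
  refine ⟨Equiv.ofBijective f hbij, ?_, ?_⟩
  · intro h
    rw [mul_inv_eq_iff_eq_mul]
    ext x
    simp only [Equiv.Perm.mul_apply, Equiv.ofBijective_apply]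
    exact hf_eq h x
  · have hsub : {x : X | Equiv.ofBijective f hbij x ≠ x} ⊆
        ⋃ h ∈ Finset.univ (α := H), {x : X | φ₁ h x ≠ φ₂ h x} := by
      intro x hx
      simp only [Equiv.ofBijective_apply, Set.mem_setOf_eq] at hx
      by_contra hmem
      simp only [Set.mem_iUnion, Set.mem_setOf_eq, not_exists] at hmem
      have hxA : x ∈ A := fun h => by
        by_contra hne
        exact hmem h (Finset.mem_univ h) hne
      exact hx (hfA x hxA)
    calc {x : X | Equiv.ofBijective f hbij x ≠ x}.ncard
        ≤ (⋃ h ∈ Finset.univ (α := H), {x : X | φ₁ h x ≠ φ₂ h x}).ncard :=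
          Set.ncard_le_ncard hsub (Set.toFinite _)
      _ ≤ ∑ h : H, {x : X | φ₁ h x ≠ φ₂ h x}.ncard :=
          ncard_biUnion_le' Finset.univ _
end

section
/- Let a group G act transitively on a finite nonempty set X, and let H be a subgroup of G of finite index [G:H]. Then there exists a positive integer n with n ≤ [G:H]^{[G:H]} such that for every x ∈ X, the cardinality |X| divides n · |H·x|, where H·x denotes the H-orbit of x. (Equivalently, every ratio |H·x|/|X| is of the form k/n for some positive integer k, with one common denominator n ≤ [G:H]^{[G:H]}.) -/
/-- If `G` acts transitively on a finite nonempty set `X` and `H ≤ G` has finite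
index, then there is a positive integer `n ≤ [G:H]^[G:H]` such that `|X|` divides
`n · |H·x|` for every `x ∈ X`. -/
theorem orbit_ratio_common_denominator
    (G : Type) [Group G] (X : Type) [Finite X] [Nonempty X] [MulAction G X]
    (htrans : MulAction.IsPretransitive G X)
    (H : Subgroup G) (hH : H.FiniteIndex) :
    ∃ n : ℕ, 0 < n ∧ n ≤ H.index ^ H.index ∧
      ∀ x : X, Nat.card X ∣ n * (MulAction.orbit H x).ncard := by
  refine ⟨H.index, Nat.pos_of_ne_zero hH.index_ne_zero, ?_, ?_⟩
  · exact Nat.le_self_pow hH.index_ne_zero H.index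
  · intro x
    set S := MulAction.stabilizer G x with hS
    have hcard : Nat.card X = S.index :=
      (MulAction.index_stabilizer_of_transitive G x).symm
    have hstab : S.subgroupOf H = MulAction.stabilizer H x := by ext; rfl
    have horb : (MulAction.orbit H x).ncard = S.relIndex H := by
      rw [Subgroup.relIndex, hstab, MulAction.index_stabilizer]
    have h1 : S.relIndex H * H.index = (H ⊓ S).index := by
      rw [← Subgroup.inf_relIndex_left]
      exact Subgroup.relIndex_mul_index inf_le_left
    have h2 : H.relIndex S * S.index = (H ⊓ S).index := by
      rw [← Subgroup.inf_relIndex_right]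
      exact Subgroup.relIndex_mul_index inf_le_right
    refine ⟨H.relIndex S, ?_⟩
    rw [horb, hcard, mul_comm (H.index), h1, ← h2, mul_comm]
end

section
/- Let G be a group and let H be a finite subgroup of G which is almost normal, i.e. there exists a subgroup H₁ of G with H normal in H₁ and H₁ of finite index in G. Then there exists a finite set S of rational numbers, depending only on G and H, with the following property: for every finite nonempty set X equipped with a transitive action of G and for every subgroup H₀ ≤ H, the ratio |{x ∈ X : Stab_H(x) is conjugate in H to H₀}| / |X| belongs to S. -/
open MulAction

private lemma count_aux {G : Type} [Group G] (N : Subgroup G) [N.Normal] [N.FiniteIndex]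
    (X : Type) [Fintype X] [MulAction G X] (hne : Nonempty X)
    (htrans : MulAction.IsPretransitive G X)
    (Y : Set X) (hY : ∀ n : G, n ∈ N → ∀ x : X, x ∈ Y → n • x ∈ Y) :
    ∃ u t : ℕ, u ≤ N.index ∧ t ≤ N.index ∧ 0 < t ∧
      (Y.ncard : ℚ) / (Fintype.card X : ℚ) = (u : ℚ) / t := by
  classical
  obtain ⟨x₀⟩ := hne
  set R := MulAction.orbitRel N X with hR
  let q : X → Quotient R := Quotient.mk''
  have hfib : ∀ x : X, {y : X | q y = q x} = MulAction.orbit N x := by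
    intro x
    ext y
    simp only [Set.mem_setOf_eq, q, Quotient.eq'']
    exact MulAction.orbitRel_apply
  set s := (MulAction.orbit N x₀).ncard with hs_def
  have hs : ∀ x : X, (MulAction.orbit N x).ncard = s := by
    intro x
    obtain ⟨g, hg⟩ := htrans.exists_smul_eq x₀ x
    rw [← hg, ← MulAction.smul_orbit_eq_orbit_smul, Set.ncard_smul_set]
  have hspos : 0 < s := by
    rw [hs_def, Set.ncard_pos (Set.toFinite _)]
    exact ⟨x₀, MulAction.mem_orbit_self x₀⟩
  haveI : Fintype (Quotient R) := Fintype.ofFinite _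
  have key : ∀ x : X, (Finset.univ.filter fun y => q y = q x).card = s := by
    intro x
    have h1 : (Finset.univ.filter fun y => q y = q x).card
        = Nat.card {y : X // q y = q x} := by
      rw [Nat.card_eq_fintype_card, Fintype.card_subtype]
    rw [h1]
    have h2 : Nat.card {y : X // q y = q x} = ({y : X | q y = q x} : Set X).ncard :=
      Nat.card_coe_set_eq _
    rw [h2, hfib x, hs x]
  have keyc : ∀ c : Quotient R, (Finset.univ.filter fun y => q y = c).card = s := by
    intro c
    induction c using Quotient.ind
    exact key _
  have hXcard : Fintype.card X = Fintype.card (Quotient R) * s := by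
    rw [← Finset.card_univ]
    rw [Finset.card_eq_sum_card_fiberwise (f := q) (t := Finset.univ) (fun x _ => Finset.mem_univ _)]
    rw [Finset.sum_congr rfl (fun c _ => keyc c), Finset.sum_const, Finset.card_univ,
      smul_eq_mul]
  set T : Finset (Quotient R) := (Y.toFinset).image q with hT
  have hYcard : Y.ncard = T.card * s := by
    rw [Set.ncard_eq_toFinset_card']
    rw [Finset.card_eq_sum_card_fiberwise (f := q) (t := T)
      (fun x hx => Finset.mem_image_of_mem q hx)]
    have : ∀ c ∈ T, (Y.toFinset.filter fun x => q x = c).card = s := by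
      intro c hc
      obtain ⟨x, hxY, rfl⟩ := Finset.mem_image.mp hc
      have hfe : (Y.toFinset.filter fun y => q y = q x)
          = (Finset.univ.filter fun y => q y = q x) := by
        ext z
        simp only [Finset.mem_filter, Finset.mem_univ, true_and, and_iff_right_iff_imp]
        intro hz
        have : z ∈ MulAction.orbit N x := by rw [← hfib x]; exact hz
        obtain ⟨n, rfl⟩ := this
        exact Set.mem_toFinset.mpr (hY (n : G) n.2 x (Set.mem_toFinset.mp hxY))
      rw [hfe, key x]
    rw [Finset.sum_congr rfl this, Finset.sum_const, smul_eq_mul]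
  -- surjection from G ⧸ N onto the orbit quotient
  have hsurj : ∃ φ : G ⧸ N → Quotient R, Function.Surjective φ := by
    refine ⟨fun gN => Quotient.liftOn' gN (fun g => q (g • x₀)) ?_, ?_⟩
    · intro a b hab
      rw [QuotientGroup.leftRel_apply] at hab
      apply Quotient.sound'
      change Setoid.r _ _
      rw [MulAction.orbitRel_apply]
      refine ⟨⟨a * b⁻¹ * a⁻¹ * a, ?_⟩, ?_⟩
      · have h1 : b⁻¹ * a ∈ N := by
          have := N.inv_mem hab; simpa using this
        have h2 : a * (b⁻¹ * a) * a⁻¹ ∈ N := Subgroup.Normal.conj_mem ‹N.Normal› _ h1 a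
        simpa [mul_assoc] using h2
      · show (a * b⁻¹ * a⁻¹ * a) • (b • x₀) = a • x₀
        rw [smul_smul]
        congr 1
        group
    · intro c
      induction c using Quotient.ind with
      | _ x =>
        obtain ⟨g, hg⟩ := htrans.exists_smul_eq x₀ x
        exact ⟨QuotientGroup.mk g, by simp [q, hg]⟩
  obtain ⟨φ, hφ⟩ := hsurj
  have ht : Fintype.card (Quotient R) ≤ N.index := by
    have h1 : Nat.card (Quotient R) ≤ Nat.card (G ⧸ N) :=
      Nat.card_le_card_of_surjective φ hφ
    rw [Nat.card_eq_fintype_card] at h1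
    exact h1.trans (le_of_eq rfl)
  have htpos : 0 < Fintype.card (Quotient R) := by
    have : Nonempty (Quotient R) := ⟨q x₀⟩
    exact Fintype.card_pos
  refine ⟨T.card, Fintype.card (Quotient R), ?_, ht, htpos, ?_⟩
  · exact le_trans (by simpa using Finset.card_le_univ T) ht
  · rw [hYcard, hXcard]
    push_cast
    rw [mul_div_mul_right _ _ (by exact_mod_cast hspos.ne')]

/-- For a finite almost normal subgroup `H ≤ G` there is a finite set `S` of
rationals, depending only on `G` and `H`, such that for every transitive action of
`G` on a finite nonempty set `X` and every subgroup `H₀ ≤ H`, the proportion of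
points of `X` whose stabilizer in `H` is conjugate (in `H`) to `H₀` lies in `S`. -/
theorem almost_normal_stabilizer_proportions
    (G : Type) [Group G] (H : Subgroup G) (hHfin : Finite H)
    (halmost : ∃ H₁ : Subgroup G, H ≤ H₁ ∧ H₁.FiniteIndex ∧
      ∀ g ∈ H₁, ∀ h ∈ H, g * h * g⁻¹ ∈ H) :
    ∃ S : Finset ℚ, ∀ (X : Type) [Fintype X] [MulAction G X], Nonempty X →
      MulAction.IsPretransitive G X →
      ∀ H₀ : Subgroup G, H₀ ≤ H →
        (({x : X | ∃ h ∈ H, {g : G | g ∈ H ∧ g • x = x} =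
            (fun a => h * a * h⁻¹) '' (H₀ : Set G)}.ncard : ℚ) / (Fintype.card X : ℚ)) ∈ S := by
  classical
  obtain ⟨H₁, hle, hH1fin, hnorm⟩ := halmost
  haveI := hH1fin
  haveI : Finite H := hHfin
  haveI : Finite (Equiv.Perm H) := by
    exact Finite.of_injective (fun e => (e : H → H)) (fun a b h => Equiv.ext (congrFun h))
  -- conjugation homomorphism H₁ →* Perm H
  let f : H₁ →* Equiv.Perm H :=
    { toFun := fun g =>
        { toFun := fun h => ⟨(g : G) * h * (g : G)⁻¹, hnorm g g.2 h h.2⟩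
          invFun := fun h => ⟨(g : G)⁻¹ * h * (g : G), by
            have := hnorm (g : G)⁻¹ (inv_mem g.2) h h.2
            simpa using this⟩
          left_inv := fun h => by ext; simp [mul_assoc]
          right_inv := fun h => by ext; simp [mul_assoc] }
      map_one' := by ext h; simp
      map_mul' := fun a b => by
        ext h
        simp [mul_assoc] }
  set K : Subgroup G := Subgroup.centralizer (H : Set G) ⊓ H₁ with hK
  have hker : f.ker ≤ K.subgroupOf H₁ := by
    intro g hg
    rw [MonoidHom.mem_ker] at hg
    rw [Subgroup.mem_subgroupOf]
    refine Subgroup.mem_inf.mpr ⟨?_, g.2⟩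
    rw [Subgroup.mem_centralizer_iff]
    intro m hm
    have := congrArg (fun e => ((e ⟨m, hm⟩ : H) : G)) hg
    simp only [Equiv.Perm.coe_one, id_eq] at this
    change (g : G) * m * (g : G)⁻¹ = m at this
    have h2 : (g : G) * m = m * (g : G) := by
      have := congrArg (· * (g : G)) this
      simpa [mul_assoc] using this
    exact h2.symm
  haveI : (K.subgroupOf H₁).FiniteIndex := Subgroup.finiteIndex_of_le hker
  haveI hKfin : K.FiniteIndex := by
    constructor
    rw [← Subgroup.relIndex_mul_index (inf_le_right : K ≤ H₁)]
    exact mul_ne_zero (Subgroup.FiniteIndex.index_ne_zero (H := K.subgroupOf H₁))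
      hH1fin.index_ne_zero
  set N : Subgroup G := K.normalCore with hN
  haveI : N.Normal := Subgroup.normalCore_normal K
  haveI : N.FiniteIndex := Subgroup.finiteIndex_normalCore K
  refine ⟨((Finset.range (N.index + 1)) ×ˢ (Finset.range (N.index + 1))).image
    (fun p => (p.1 : ℚ) / (p.2 : ℚ)), ?_⟩
  intro X _ _ hne htrans H₀ hH₀le
  set Y : Set X := {x : X | ∃ h ∈ H, {g : G | g ∈ H ∧ g • x = x} =
      (fun a => h * a * h⁻¹) '' (H₀ : Set G)} with hYdef
  have hYinv : ∀ n : G, n ∈ N → ∀ x : X, x ∈ Y → n • x ∈ Y := by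
    intro n hn x hx
    have hcent : n ∈ Subgroup.centralizer (H : Set G) :=
      (inf_le_left : K ≤ _) (Subgroup.normalCore_le K hn)
    have hsets : {g : G | g ∈ H ∧ g • (n • x) = n • x} = {g : G | g ∈ H ∧ g • x = x} := by
      ext g
      simp only [Set.mem_setOf_eq, and_congr_right_iff]
      intro hg
      have hcomm : g * n = n * g := (Subgroup.mem_centralizer_iff.mp hcent g hg)
      rw [smul_smul, hcomm, ← smul_smul]
      exact smul_left_cancel_iff _
    obtain ⟨h, hh, heq⟩ := hx
    exact ⟨h, hh, hsets.trans heq⟩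
  obtain ⟨u, t, hu, ht, htpos, hratio⟩ := count_aux N X hne htrans Y hYinv
  rw [hratio]
  apply Finset.mem_image.mpr
  exact ⟨(u, t), Finset.mem_product.mpr ⟨Finset.mem_range.mpr (Nat.lt_succ_of_le hu),
    Finset.mem_range.mpr (Nat.lt_succ_of_le ht)⟩, rfl⟩
end

section
/- Let G be a residually finite group and let H be a finite subgroup of G. Then there exist a finite set X and an action of G on X such that for every subgroup H₀ of H there is a point x ∈ X whose stabilizer in H is exactly H₀, i.e. {h ∈ H : h·x = x} = H₀. (This is the permutation-action instance of the statement that some element of the image of the restriction map i* : Λ⁺(G) → Λ⁺(H) has all coordinates nonzero.) -/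
/-- If `G` is residually finite and `H ≤ G` is finite, then there is an action of
`G` on a finite set `X` such that every subgroup `H₀ ≤ H` is realized as the
stabilizer in `H` of some point of `X`. -/
theorem residually_finite_realizes_all_stabilizers
    (G : Type) [Group G]
    (hres : ∀ g : G, g ≠ 1 → ∃ (F : Type) (_ : Group F) (_ : Finite F)
      (f : G →* F), f g ≠ 1)
    (H : Subgroup G) (hH : Finite H) :
    ∃ (X : Type) (_ : Fintype X) (_ : MulAction G X),
      ∀ H₀ : Subgroup G, H₀ ≤ H →
        ∃ x : X, {h : G | h ∈ H ∧ h • x = x} = (H₀ : Set G) := by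
  classical
  -- separate all nontrivial elements of H at once
  set S := {g : H // (g : G) ≠ 1} with hS
  choose F instF instFin f hf using fun s : S => hres (s.1 : G) s.2
  letI : ∀ s : S, Group (F s) := instF
  haveI : ∀ s : S, Finite (F s) := instFin
  let F' : Type := ∀ s : S, F s
  let f' : G →* F' := MonoidHom.mk' (fun g s => f s g) (by
    intro a b; funext s; simp only [map_mul]; rfl)
  have hinj : ∀ h ∈ H, f' h = 1 → h = 1 := by
    intro h hh hfh
    by_contra hne
    exact hf ⟨⟨h, hh⟩, hne⟩ (congrFun hfh ⟨⟨h, hh⟩, hne⟩)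
  -- the space: disjoint union of coset spaces
  let K' : Subgroup H → Subgroup F' := fun K => Subgroup.map f' (Subgroup.map H.subtype K)
  let X : Type := Σ K : Subgroup H, F' ⧸ K' K
  letI : ∀ K : Subgroup H, MulAction G (F' ⧸ K' K) := fun K =>
    MulAction.compHom _ f'
  haveI : Finite X := inferInstance
  refine ⟨X, Fintype.ofFinite X, inferInstance, ?_⟩
  intro H₀ hle
  set K := H₀.subgroupOf H with hK
  have hmap : Subgroup.map H.subtype K = H₀ := by
    rw [hK, Subgroup.subgroupOf_map_subtype, inf_eq_left.mpr hle]
  have hK' : K' K = Subgroup.map f' H₀ := by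
    show Subgroup.map f' (Subgroup.map H.subtype K) = _
    rw [hmap]
  have key : ∀ h : G, h ∈ H → (f' h ∈ K' K ↔ h ∈ H₀) := by
    intro h hh
    rw [hK']
    constructor
    · rintro ⟨a, ha, hahm⟩
      have h1 : a⁻¹ * h = 1 := hinj _ (H.mul_mem (H.inv_mem (hle ha)) hh)
        (by rw [map_mul, map_inv, hahm, inv_mul_cancel])
      have h2 : a = h := inv_mul_eq_one.mp h1
      exact h2 ▸ ha
    · intro hmem
      exact ⟨h, hmem, rfl⟩
  refine ⟨⟨K, QuotientGroup.mk (1 : F')⟩, ?_⟩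
  ext h
  simp only [Set.mem_setOf_eq, SetLike.mem_coe]
  have hsmul : h • (⟨K, QuotientGroup.mk (1 : F')⟩ : X) =
      ⟨K, QuotientGroup.mk (f' h * 1)⟩ := rfl
  constructor
  · rintro ⟨hh, hx⟩
    rw [hsmul] at hx
    have hx2 : (QuotientGroup.mk (f' h * 1) : F' ⧸ K' K) = QuotientGroup.mk 1 :=
      eq_of_heq (Sigma.mk.inj_iff.mp hx).2
    rw [QuotientGroup.eq] at hx2
    have : f' h ∈ K' K := by
      exact (K' K).inv_mem_iff.mp (by simpa [mul_one] using hx2)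
    exact (key h hh).mp this
  · intro hmem
    refine ⟨hle hmem, ?_⟩
    rw [hsmul]
    congr 1
    rw [QuotientGroup.eq]
    have : f' h ∈ K' K := (key h (hle hmem)).mpr hmem
    simpa [mul_one] using (K' K).inv_mem this
end

section
/- Let G be a finite group and H a subgroup of G satisfying the extension property for actions on finite sets: for every finite set X and every group homomorphism ρ : H → Sym(X) there exists a group homomorphism σ : G → Sym(X) with σ(h) = ρ(h) for all h ∈ H. Then for every ε > 0 there exists δ > 0 such that for every finite set X and all group homomorphisms φ : G → Sym(X) and ψ₀ : H → Sym(X) satisfying |{x ∈ X : ψ₀(h)(x) ≠ φ(h)(x)}| ≤ δ·|X| for all h ∈ H, there exists a group homomorphism ψ : G → Sym(X) with ψ(h) = ψ₀(h) for all h ∈ H and |{x ∈ X : ψ(g)(x) ≠ φ(g)(x)}| ≤ ε·|X| for all g ∈ G. (For finite groups the extension property implies the homomorphism alteration property with respect to the normalized Hamming distance.) -/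
private lemma ncard_iUnion_le' {ι α : Type*} [Fintype ι] (s : ι → Set α) :
    (⋃ i, s i).ncard ≤ ∑ i : ι, (s i).ncard := by
  classical
  have : (⋃ i, s i) = ⋃ i ∈ Finset.univ, s i := by simp
  rw [this]
  induction (Finset.univ : Finset ι) using Finset.induction with
  | empty => simp
  | insert _ _ h ih =>
      rw [Finset.set_biUnion_insert, Finset.sum_insert h]
      exact le_trans (Set.ncard_union_le _ _) (add_le_add_right ih _)

/-- For a finite group `G` and a subgroup `H ≤ G`, the extension property for
actions on finite sets implies the homomorphism alteration property with respect
to the normalized Hamming distance. -/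
theorem extension_implies_alteration_P
    (G : Type) [Group G] [Fintype G] (H : Subgroup G)
    (hext : ∀ (X : Type) [Fintype X], ∀ ρ : H →* Equiv.Perm X,
      ∃ σ : G →* Equiv.Perm X, ∀ h : H, σ (h : G) = ρ h) :
    ∀ ε : ℝ, 0 < ε → ∃ δ : ℝ, 0 < δ ∧
      ∀ (X : Type) [Fintype X],
        ∀ (φ : G →* Equiv.Perm X) (ψ₀ : H →* Equiv.Perm X),
          (∀ h : H, ({x : X | ψ₀ h x ≠ φ (h : G) x}.ncard : ℝ) ≤ δ * Fintype.card X) →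
          ∃ ψ : G →* Equiv.Perm X,
            (∀ h : H, ψ (h : G) = ψ₀ h) ∧
            ∀ g : G, ({x : X | ψ g x ≠ φ g x}.ncard : ℝ) ≤ ε * Fintype.card X := by
  classical
  intro ε hε
  set n : ℕ := Fintype.card G with hn
  refine ⟨ε / (n * n + 1), by positivity, ?_⟩
  intro X _ φ ψ₀ hsmall
  haveI : Fintype H := Fintype.ofFinite _
  -- the bad set
  set B : Set X := ⋃ h : H, {x : X | ψ₀ h x ≠ φ (h : G) x} with hB
  set S : Set X := ⋃ g : G, φ g '' B with hSdef
  -- S is φ-invariant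
  have hφS : ∀ (g : G) (x : X), x ∈ S → φ g x ∈ S := by
    intro g x hx
    rw [hSdef, Set.mem_iUnion] at hx ⊢
    obtain ⟨g', b, hb, rfl⟩ := hx
    exact ⟨g * g', b, hb, by simp [map_mul]⟩
  have hφS' : ∀ (g : G) (x : X), φ g x ∈ S → x ∈ S := by
    intro g x hx
    have := hφS g⁻¹ _ hx
    simpa [map_inv] using this
  have hBS : B ⊆ S := by
    intro x hx
    rw [hSdef, Set.mem_iUnion]
    exact ⟨1, x, hx, by simp⟩
  -- off S, ψ₀ agrees with φ
  have hoff : ∀ (h : H) (x : X), x ∉ S → ψ₀ h x = φ (h : G) x := by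
    intro h x hx
    by_contra hne
    exact hx (hBS (Set.mem_iUnion.mpr ⟨h, hne⟩))
  -- ψ₀ preserves the complement of S, hence S
  have hoffS : ∀ (h : H) (x : X), x ∉ S → ψ₀ h x ∉ S := by
    intro h x hx
    rw [hoff h x hx]
    exact fun hc => hx (hφS' _ _ hc)
  have hψ₀S : ∀ (h : H) (x : X), x ∈ S ↔ ψ₀ h x ∈ S := by
    intro h x
    constructor
    · intro hx
      by_contra hc
      have := hoffS h⁻¹ _ hc
      rw [show ψ₀ h⁻¹ (ψ₀ h x) = x by
        rw [map_inv]; exact Equiv.symm_apply_apply _ _] at this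
      exact this hx
    · intro hx
      by_contra hc
      exact hoffS h x hc hx
  have hφSiff : ∀ (g : G) (x : X), x ∈ S ↔ φ g x ∈ S :=
    fun g x => ⟨hφS g x, hφS' g x⟩
  -- restrict ψ₀ to S
  haveI : Fintype {x : X // x ∈ S} := Fintype.ofFinite _
  let ρ : H →* Equiv.Perm {x : X // x ∈ S} :=
    { toFun := fun h => (ψ₀ h).subtypePerm (fun x => (hψ₀S h x).symm)
      map_one' := by ext x; simp [Equiv.Perm.subtypePerm_apply]
      map_mul' := fun a b => by
        ext x; simp [Equiv.Perm.subtypePerm_apply, map_mul]; rfl }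
  obtain ⟨σ, hσ⟩ := hext {x : X // x ∈ S} ρ
  -- restrict φ to the complement of S
  let τ : G →* Equiv.Perm {x : X // x ∉ S} :=
    { toFun := fun g => (φ g).subtypePerm (fun x => not_iff_not.mpr (hφSiff g x).symm)
      map_one' := by ext x; simp [Equiv.Perm.subtypePerm_apply]
      map_mul' := fun a b => by
        ext x; simp [Equiv.Perm.subtypePerm_apply, map_mul]; rfl }
  -- glue
  let ψ : G →* Equiv.Perm X :=
    (Equiv.Perm.subtypeCongrHom (· ∈ S)).comp (σ.prod τ)
  have hψ_mem : ∀ (g : G) (x : X) (hx : x ∈ S), ψ g x = (σ g ⟨x, hx⟩ : X) := by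
    intro g x hx
    exact Equiv.Perm.subtypeCongr.left_apply _ _ hx
  have hψ_notmem : ∀ (g : G) (x : X) (hx : x ∉ S), ψ g x = φ g x := by
    intro g x hx
    exact Equiv.Perm.subtypeCongr.right_apply _ _ hx
  refine ⟨ψ, ?_, ?_⟩
  · intro h
    ext x
    by_cases hx : x ∈ S
    · rw [hψ_mem _ x hx, hσ h]
      rfl
    · rw [hψ_notmem _ x hx, hoff h x hx]
  · intro g
    have hsub : {x : X | ψ g x ≠ φ g x} ⊆ S := by
      intro x hx
      by_contra hc
      exact hx (hψ_notmem g x hc)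
    have h1 : ({x : X | ψ g x ≠ φ g x}.ncard : ℝ) ≤ (S.ncard : ℝ) := by
      exact_mod_cast Set.ncard_le_ncard hsub (Set.toFinite S)
    -- bound ncard B
    have hBbound : (B.ncard : ℝ) ≤ (Fintype.card H : ℝ) * (ε / (n * n + 1) * Fintype.card X) := by
      calc (B.ncard : ℝ) ≤ (∑ h : H, ({x : X | ψ₀ h x ≠ φ (h : G) x}.ncard) : ℕ) := by
            exact_mod_cast ncard_iUnion_le' _
        _ = ∑ h : H, (({x : X | ψ₀ h x ≠ φ (h : G) x}.ncard : ℝ)) := by push_cast; ring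
        _ ≤ ∑ _h : H, (ε / (n * n + 1) * Fintype.card X) :=
            Finset.sum_le_sum (fun h _ => hsmall h)
        _ = (Fintype.card H : ℝ) * (ε / (n * n + 1) * Fintype.card X) := by
            simp [Finset.sum_const, nsmul_eq_mul]
    have hSbound : ((S.ncard : ℝ)) ≤
        (n : ℝ) * ((Fintype.card H : ℝ) * (ε / (n * n + 1) * Fintype.card X)) := by
      calc (S.ncard : ℝ) ≤ ((∑ g : G, (φ g '' B).ncard : ℕ) : ℝ) := by
            exact_mod_cast ncard_iUnion_le' _
        _ = ∑ g : G, ((φ g '' B).ncard : ℝ) := by push_cast; ring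
        _ = ∑ _g : G, (B.ncard : ℝ) := by
            refine Finset.sum_congr rfl (fun g _ => ?_)
            rw [Set.ncard_image_of_injective _ (φ g).injective]
        _ = (n : ℝ) * (B.ncard : ℝ) := by simp [hn, Finset.sum_const, nsmul_eq_mul]
        _ ≤ (n : ℝ) * ((Fintype.card H : ℝ) * (ε / (n * n + 1) * Fintype.card X)) := by
            apply mul_le_mul_of_nonneg_left hBbound (by positivity)
    have hHn : (Fintype.card H : ℝ) ≤ (n : ℝ) := by
      have := Subgroup.card_le_card_group H
      simp only [Nat.card_eq_fintype_card] at this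
      exact_mod_cast this
    have hfinal : (n : ℝ) * ((Fintype.card H : ℝ) * (ε / (n * n + 1) * Fintype.card X))
        ≤ ε * Fintype.card X := by
      have hXn : (0:ℝ) ≤ Fintype.card X := by positivity
      have hnn : (0:ℝ) ≤ (n:ℝ) := by positivity
      have key : (n : ℝ) * (Fintype.card H : ℝ) * (ε / (n * n + 1)) ≤ ε := by
        rw [div_eq_mul_inv]
        have h1 : (n : ℝ) * (Fintype.card H : ℝ) ≤ (n * n + 1 : ℝ) := by
          nlinarith
        have hpos : (0:ℝ) < (n * n + 1 : ℝ) := by positivity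
        calc (n : ℝ) * (Fintype.card H : ℝ) * (ε * ((n:ℝ) * n + 1)⁻¹)
            ≤ ((n:ℝ) * n + 1) * (ε * ((n:ℝ) * n + 1)⁻¹) := by
              apply mul_le_mul_of_nonneg_right (by linarith) (by positivity)
          _ = ε := by field_simp
      calc (n : ℝ) * ((Fintype.card H : ℝ) * (ε / (n * n + 1) * Fintype.card X))
          = ((n : ℝ) * (Fintype.card H : ℝ) * (ε / (n * n + 1))) * Fintype.card X := by ring
        _ ≤ ε * Fintype.card X := mul_le_mul_of_nonneg_right key hXn
    linarith
end

section
/- Let ι be a finite index set, and let K be an additive submonoid of ℤ^ι such that: (a) for every ξ ∈ K and every i ∈ ι, the vector whose i-th coordinate is ξ_i and whose other coordinates are 0 also belongs to K (so K is the direct sum of its coordinate pieces K ∩ ℤe_i, i.e. K is primitive with respect to the standard basis); and (b) for every i ∈ ι there exists ξ ∈ K with ξ_i ≠ 0. Let d : ℤ^ι → ℤ^m be an additive (ℤ-linear) map. Then there exists a constant C > 0, depending only on K and d, such that for every ξ ∈ K there exist ξ', η ∈ K with: for each i ∈ ι either ξ'_i = ξ_i or ξ'_i = 0; d(ξ' +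 η) = 0; and ‖ξ − ξ'‖₁ ≤ C·‖d(ξ)‖₁ and ‖η‖₁ ≤ C·‖d(ξ)‖₁, where ‖·‖₁ denotes the ℓ¹ norm (sum of absolute values of coordinates). -/
/-- The ℓ¹ norm of an integer vector: the sum of the absolute values of its
coordinates. -/
def l1norm {α : Type} [Fintype α] (v : α → ℤ) : ℕ :=
  ∑ i, (v i).natAbs

set_option linter.unusedSectionVars false

section helpers
variable {α : Type} [Fintype α]

lemma l1norm_apply_le (v : α → ℤ) (i : α) : (v i).natAbs ≤ l1norm v :=
  Finset.single_le_sum (f := fun j => (v j).natAbs) (fun _ _ => Nat.zero_le _) (Finset.mem_univ i)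

lemma l1norm_add_le (v w : α → ℤ) : l1norm (v + w) ≤ l1norm v + l1norm w := by
  unfold l1norm
  rw [← Finset.sum_add_distrib]
  exact Finset.sum_le_sum fun i _ => Int.natAbs_add_le _ _

lemma l1norm_neg (v : α → ℤ) : l1norm (-v) = l1norm v := by
  simp [l1norm]

lemma l1norm_zsmul (c : ℤ) (v : α → ℤ) : l1norm (c • v) = c.natAbs * l1norm v := by
  simp [l1norm, Int.natAbs_mul, Finset.mul_sum]

lemma l1norm_nsmul (c : ℕ) (v : α → ℤ) : l1norm (c • v) = c * l1norm v := by
  simp [l1norm, Int.natAbs_mul, Finset.mul_sum]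

lemma l1norm_sum_le {β : Type*} (s : Finset β) (f : β → α → ℤ) :
    l1norm (∑ b ∈ s, f b) ≤ ∑ b ∈ s, l1norm (f b) := by
  classical
  induction s using Finset.induction with
  | empty => simp [l1norm]
  | insert _ _ h ih =>
      rw [Finset.sum_insert h, Finset.sum_insert h]
      exact le_trans (l1norm_add_le _ _) (Nat.add_le_add_left ih _)

lemma eq_zero_of_l1norm_eq_zero {v : α → ℤ} (h : l1norm v = 0) : v = 0 := by
  funext i
  have := l1norm_apply_le v i
  simp only [Pi.zero_apply]
  omega
  
lemma l1norm_zero : l1norm (0 : α → ℤ) = 0 := by simp [l1norm]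

lemma l1norm_sub_comm (v w : α → ℤ) : l1norm (v - w) = l1norm (w - v) := by
  rw [← l1norm_neg (v - w)]; congr 1; abel

end helpers

section hom
variable {α β : Type} [Fintype α] [DecidableEq α] [Fintype β]

lemma hom_expand (A : (α → ℤ) →+ (β → ℤ)) (w : α → ℤ) :
    A w = ∑ i, w i • A (Pi.single i 1) := by
  have h1 : w = ∑ i, Pi.single i (w i) := (Finset.univ_sum_single w).symm
  calc A w = A (∑ i, Pi.single i (w i)) := by rw [← h1]
    _ = ∑ i, A (Pi.single i (w i)) := map_sum A _ _
    _ = ∑ i, w i • A (Pi.single i 1) := by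
        refine Finset.sum_congr rfl fun i _ => ?_
        rw [← map_zsmul]
        congr 1
        ext j
        by_cases h : j = i <;> simp [h, Pi.single_apply]

lemma hom_l1_bound (A : (α → ℤ) →+ (β → ℤ)) :
    ∃ CA : ℕ, ∀ w, l1norm (A w) ≤ CA * l1norm w := by
  classical
  refine ⟨∑ i, l1norm (A (Pi.single i 1)), fun w => ?_⟩
  rw [hom_expand A w]
  calc l1norm (∑ i, w i • A (Pi.single i 1)) ≤ ∑ i, l1norm (w i • A (Pi.single i 1)) :=
        l1norm_sum_le _ _
    _ = ∑ i, (w i).natAbs * l1norm (A (Pi.single i 1)) :=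
        Finset.sum_congr rfl fun i _ => l1norm_zsmul _ _
    _ ≤ ∑ i, l1norm w * l1norm (A (Pi.single i 1)) :=
        Finset.sum_le_sum fun i _ => Nat.mul_le_mul_right _ (l1norm_apply_le w i)
    _ = (∑ i, l1norm (A (Pi.single i 1))) * l1norm w := by
        rw [Finset.sum_mul]
        exact Finset.sum_congr rfl fun i _ => Nat.mul_comm _ _

end hom

section lattice

variable {κ : Type} [Fintype κ] [DecidableEq κ]

/-- restriction to the first m coordinates, as an AddMonoidHom -/
def projHom (m : ℕ) : (Fin (m+1) → ℤ) →+ (Fin m → ℤ) where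
  toFun v := fun j => v j.castSucc
  map_zero' := rfl
  map_add' _ _ := rfl

lemma l1norm_projHom_le (m : ℕ) (v : Fin (m+1) → ℤ) :
    l1norm (projHom m v) ≤ l1norm v := by
  unfold l1norm
  rw [Fin.sum_univ_castSucc (f := fun j => (v j).natAbs)]
  exact Nat.le_add_right _ _

lemma lattice_section (m : ℕ) (A : (κ → ℤ) →+ (Fin m → ℤ)) :
    ∃ C : ℕ, ∀ u : Fin m → ℤ, (∃ w, A w = u) →
      ∃ w, A w = u ∧ l1norm w ≤ C * (l1norm u + 1) := by
  induction m with
  | zero =>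
      refine ⟨0, fun u _ => ⟨0, ?_, by simp [l1norm]⟩⟩
      funext j; exact Fin.elim0 j
  | succ m IH =>
      set A' : (κ → ℤ) →+ (Fin m → ℤ) := (projHom m).comp A with hA'
      set αh : (κ → ℤ) →+ ℤ := (Pi.evalAddMonoidHom (fun _ => ℤ) (Fin.last m)).comp A with hαh
      obtain ⟨C', hC'⟩ := IH A'
      obtain ⟨CA, hCA⟩ := hom_l1_bound A
      set H : AddSubgroup ℤ := AddSubgroup.map αh (AddMonoidHom.ker A') with hH
      obtain ⟨c, hc⟩ := Int.subgroup_cyclic H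
      have hcH : c ∈ H := by rw [hc]; exact AddSubgroup.subset_closure rfl
      obtain ⟨κ₀, hκ₀ker, hκ₀α⟩ := hcH
      refine ⟨C' + (1 + CA * C') * l1norm κ₀, fun u ⟨w₀, hw₀⟩ => ?_⟩
      obtain ⟨w', hw', hw'b⟩ := hC' (A' w₀) ⟨w₀, rfl⟩
      have hu' : A' w₀ = projHom m u := by rw [hA']; simp [hw₀]
      -- δ lies in H
      have hδH : u (Fin.last m) - αh w' ∈ H := by
        refine ⟨w₀ - w', ?_, ?_⟩
        · have : A' (w₀ - w') = 0 := by rw [map_sub, hw', sub_self]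
          exact this
        · rw [map_sub, hαh]
          simp [hw₀]
      rw [hc, AddSubgroup.mem_closure_singleton] at hδH
      obtain ⟨z, hz⟩ := hδH
      by_cases hc0 : c = 0
      · -- δ = 0, take w := w'
        have hδ0 : u (Fin.last m) - αh w' = 0 := by rw [← hz, hc0, smul_zero]
        refine ⟨w', ?_, ?_⟩
        · funext j
          refine Fin.lastCases ?_ ?_ j
          · have := sub_eq_zero.mp hδ0
            exact this.symm
          · intro i
            have : A' w' = projHom m u := by rw [hw', hu']
            exact congrFun this i
        · calc l1norm w' ≤ C' * (l1norm (A' w₀) + 1) := hw'b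
            _ ≤ C' * (l1norm u + 1) := by
                refine Nat.mul_le_mul_left _ (Nat.add_le_add_right ?_ 1)
                rw [hu']; exact l1norm_projHom_le m u
            _ ≤ (C' + (1 + CA * C') * l1norm κ₀) * (l1norm u + 1) :=
                Nat.mul_le_mul_right _ (Nat.le_add_right _ _)
      · refine ⟨w' + z • κ₀, ?_, ?_⟩
        · funext j
          refine Fin.lastCases ?_ ?_ j
          · show (A (w' + z • κ₀)) (Fin.last m) = u (Fin.last m)
            have : αh (w' + z • κ₀) = αh w' + z • c := by
              rw [map_add, map_zsmul, hκ₀α]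
            have h2 : αh (w' + z • κ₀) = u (Fin.last m) := by
              rw [this, hz]; ring
            exact h2
          · intro i
            have : A' (w' + z • κ₀) = projHom m u := by
              rw [map_add, map_zsmul, hκ₀ker, smul_zero, add_zero, hw', hu']
            exact congrFun this i
        · -- the bound
          have hw'u : l1norm w' ≤ C' * (l1norm u + 1) := by
            calc l1norm w' ≤ C' * (l1norm (A' w₀) + 1) := hw'b
              _ ≤ C' * (l1norm u + 1) := by
                  refine Nat.mul_le_mul_left _ (Nat.add_le_add_right ?_ 1)
                  rw [hu']; exact l1norm_projHom_le m u
          have hzb : z.natAbs ≤ l1norm u + CA * l1norm w' := by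
            have h1 : z.natAbs ≤ (z • c).natAbs := by
              rw [smul_eq_mul, Int.natAbs_mul]
              have : 1 ≤ c.natAbs := Int.natAbs_pos.mpr hc0
              calc z.natAbs = z.natAbs * 1 := (Nat.mul_one _).symm
                _ ≤ z.natAbs * c.natAbs := Nat.mul_le_mul_left _ this
            rw [hz] at h1
            have h2 : (u (Fin.last m) - αh w').natAbs ≤
                (u (Fin.last m)).natAbs + (αh w').natAbs := Int.natAbs_sub_le _ _
            have h3 : (u (Fin.last m)).natAbs ≤ l1norm u := l1norm_apply_le u _
            have h4 : (αh w').natAbs ≤ CA * l1norm w' := by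
              have : (A w' (Fin.last m)).natAbs ≤ l1norm (A w') := l1norm_apply_le _ _
              exact le_trans this (hCA w')
            omega
          calc l1norm (w' + z • κ₀) ≤ l1norm w' + l1norm (z • κ₀) := l1norm_add_le _ _
            _ = l1norm w' + z.natAbs * l1norm κ₀ := by rw [l1norm_zsmul]
            _ ≤ C' * (l1norm u + 1) + (l1norm u + CA * (C' * (l1norm u + 1))) * l1norm κ₀ := by
                have : z.natAbs * l1norm κ₀ ≤ (l1norm u + CA * (C' * (l1norm u + 1))) * l1norm κ₀ := by
                  refine Nat.mul_le_mul_right _ ?_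
                  calc z.natAbs ≤ l1norm u + CA * l1norm w' := hzb
                    _ ≤ l1norm u + CA * (C' * (l1norm u + 1)) :=
                        Nat.add_le_add_left (Nat.mul_le_mul_left _ hw'u) _
                omega
            _ ≤ (C' + (1 + CA * C') * l1norm κ₀) * (l1norm u + 1) := by
                have : l1norm u + CA * (C' * (l1norm u + 1)) ≤ (1 + CA * C') * (l1norm u + 1) := by
                  ring_nf; omega
                calc C' * (l1norm u + 1) + (l1norm u + CA * (C' * (l1norm u + 1))) * l1norm κ₀
                    ≤ C' * (l1norm u + 1) + ((1 + CA * C') * (l1norm u + 1)) * l1norm κ₀ :=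
                      Nat.add_le_add_left (Nat.mul_le_mul_right _ this) _
                  _ = (C' + (1 + CA * C') * l1norm κ₀) * (l1norm u + 1) := by ring

end lattice

section intsub

lemma nat_mul_mem (M : AddSubmonoid ℤ) {m : ℤ} (hm : m ∈ M) (k : ℕ) : (k : ℤ) * m ∈ M := by
  have := AddSubmonoid.nsmul_mem M hm k
  rwa [nsmul_eq_mul] at this

/-- every element of the subgroup generated by a submonoid of ℤ is a difference -/
lemma subgroup_closure_diff (M : AddSubmonoid ℤ) :
    ∀ x ∈ AddSubgroup.closure (M : Set ℤ), ∃ m₁ ∈ M, ∃ m₂ ∈ M, x = m₁ - m₂ := by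
  intro x hx
  let D : AddSubgroup ℤ :=
    { carrier := {x | ∃ m₁ ∈ M, ∃ m₂ ∈ M, x = m₁ - m₂}
      zero_mem' := ⟨0, M.zero_mem, 0, M.zero_mem, by ring⟩
      add_mem' := by
        rintro a b ⟨m₁, h₁, m₂, h₂, rfl⟩ ⟨m₃, h₃, m₄, h₄, rfl⟩
        exact ⟨m₁ + m₃, M.add_mem h₁ h₃, m₂ + m₄, M.add_mem h₂ h₄, by ring⟩
      neg_mem' := by
        rintro a ⟨m₁, h₁, m₂, h₂, rfl⟩
        exact ⟨m₂, h₂, m₁, h₁, by ring⟩ }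
  have hMD : (M : Set ℤ) ⊆ D := fun y hy => ⟨y, hy, 0, M.zero_mem, by ring⟩
  exact (AddSubgroup.closure_le D).mpr hMD hx

/-- two-sided case: a submonoid of ℤ with both a positive and a negative element
is a subgroup. -/
lemma twosided_group (M : AddSubmonoid ℤ) {a b : ℤ} (ha : a ∈ M) (hb : b ∈ M)
    (hapos : 0 < a) (hbneg : b < 0) :
    ∀ x ∈ AddSubgroup.closure (M : Set ℤ), x ∈ M := by
  set P : ℤ := a * (-b) with hP
  have hPpos : 0 < P := mul_pos hapos (by omega)
  have hPmem : P ∈ M := by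
    have := nat_mul_mem M ha (-b).toNat
    rwa [Int.toNat_of_nonneg (by omega), mul_comm] at this
  have hnPmem : -P ∈ M := by
    have h2 := nat_mul_mem M hb a.toNat
    rw [Int.toNat_of_nonneg (by omega)] at h2
    have h3 : -P = a * b := by rw [hP]; ring
    rw [h3]
    exact h2
  have hshift : ∀ x ∈ M, ∀ k : ℤ, x + k * P ∈ M := by
    intro x hx k
    rcases le_or_gt 0 k with hk | hk
    · have := M.add_mem hx (nat_mul_mem M hPmem k.toNat)
      rwa [Int.toNat_of_nonneg hk] at this
    · have := M.add_mem hx (nat_mul_mem M hnPmem (-k).toNat)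
      rw [Int.toNat_of_nonneg (by omega)] at this
      rwa [show -k * -P = k * P by ring] at this
  intro x hx
  obtain ⟨m₁, h₁, m₂, h₂, rfl⟩ := subgroup_closure_diff M x hx
  have hm2 : -m₂ ∈ M := by
    have h3 : ((P - 1).toNat : ℤ) * m₂ ∈ M := nat_mul_mem M h₂ _
    rw [Int.toNat_of_nonneg (by omega)] at h3
    have := hshift _ h3 (-m₂)
    rwa [show (P-1) * m₂ + -m₂ * P = -m₂ by ring] at this
  have := M.add_mem h₁ hm2
  rwa [show m₁ + -m₂ = m₁ - m₂ by ring] at this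

/-- one-sided positive case: large multiples of the gcd are in M -/
lemma onesided_large_multiples (M : AddSubmonoid ℤ) (g : ℤ) (hgpos : 0 < g)
    (hgG : g ∈ AddSubgroup.closure (M : Set ℤ))
    (hdvd : ∀ x ∈ M, g ∣ x) (hnn : ∀ x ∈ M, 0 ≤ x) :
    ∃ N : ℕ, ∀ n : ℕ, N ≤ n → g * n ∈ M := by
  obtain ⟨m₁, h₁, m₂, h₂, hdiff⟩ := subgroup_closure_diff M g hgG
  obtain ⟨q, hq⟩ := hdvd m₂ h₂
  have hq0 : 0 ≤ q := by nlinarith [hnn m₂ h₂]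
  have hm₁ : m₁ = g * (q + 1) := by rw [mul_add, ← hq, mul_one]; omega
  rcases eq_or_lt_of_le hq0 with hq0' | hqpos
  · -- q = 0 : g ∈ M, all multiples
    refine ⟨0, fun n _ => ?_⟩
    have hgM : g ∈ M := by rw [hdiff, hq, ← hq0']; simpa using h₁
    have := nat_mul_mem M hgM n
    rwa [mul_comm] at this
  · refine ⟨(q * q).toNat, fun n hn => ?_⟩
    have hn' : q * q ≤ (n : ℤ) := Int.toNat_le.mp hn
    set r := (n : ℤ) % q with hr
    set s := (n : ℤ) / q with hsdef
    have hr0 : 0 ≤ r := Int.emod_nonneg _ (by omega)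
    have hrq : r < q := Int.emod_lt_of_pos _ hqpos
    have hs : (n : ℤ) = q * s + r := (Int.mul_ediv_add_emod (n:ℤ) q).symm
    have hsr : 0 ≤ s - r := by nlinarith
    have hmem1 : r * m₁ ∈ M := by
      have := nat_mul_mem M h₁ r.toNat
      rwa [Int.toNat_of_nonneg hr0] at this
    have hmem2 : (s - r) * m₂ ∈ M := by
      have := nat_mul_mem M h₂ (s - r).toNat
      rwa [Int.toNat_of_nonneg hsr] at this
    have key : g * n = r * m₁ + (s - r) * m₂ := by
      rw [hm₁, hq]; nlinarith [hs]
    rw [key]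
    exact M.add_mem hmem1 hmem2

end intsub

/-- structure of a nonzero submonoid of ℤ -/
lemma int_submonoid_structure (M : AddSubmonoid ℤ) (hM : ∃ x ∈ M, x ≠ 0) :
    ∃ (g ε : ℤ) (N : ℕ), 0 < g ∧ (ε = 1 ∨ ε = -1) ∧
      (∀ x ∈ M, g ∣ x) ∧
      (∀ n : ℕ, N ≤ n → ε * (g * n) ∈ M) ∧
      ((∀ x : ℤ, g ∣ x → x ∈ M) ∨ (∀ x ∈ M, 0 ≤ ε * x)) := by
  classical
  set G := AddSubgroup.closure (M : Set ℤ) with hG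
  have hMG : ∀ x ∈ M, x ∈ G := fun x hx => AddSubgroup.subset_closure hx
  obtain ⟨a, ha⟩ := Int.subgroup_cyclic G
  have hmem : ∀ x, x ∈ G ↔ ∃ z : ℤ, z • a = x := by
    intro x; rw [ha, AddSubgroup.mem_closure_singleton]
  have hane : a ≠ 0 := by
    obtain ⟨x, hxM, hxne⟩ := hM
    obtain ⟨z, hz⟩ := (hmem x).mp (hMG x hxM)
    rintro rfl
    simp at hz
    exact hxne hz.symm
  set g : ℤ := (a.natAbs : ℤ) with hg
  have hgpos : 0 < g := by
    simp only [hg]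
    exact_mod_cast Int.natAbs_pos.mpr hane
  have hdvd : ∀ x ∈ M, g ∣ x := by
    intro x hx
    obtain ⟨z, hz⟩ := (hmem x).mp (hMG x hx)
    rw [hg, Int.natAbs_dvd]
    exact ⟨z, by rw [← hz, zsmul_eq_mul]; push_cast; ring⟩
  have hgG : g ∈ G := by
    rcases Int.natAbs_eq a with h | h
    · rw [hg, ← h]; exact (hmem a).mpr ⟨1, one_smul _ _⟩
    · have : g = -a := by omega
      rw [this]
      exact G.neg_mem ((hmem a).mpr ⟨1, one_smul _ _⟩)
  by_cases hpos : ∃ x ∈ M, 0 < x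
  · by_cases hneg : ∃ x ∈ M, x < 0
    · -- two-sided
      obtain ⟨x₁, hx₁, hx₁p⟩ := hpos
      obtain ⟨x₂, hx₂, hx₂n⟩ := hneg
      have hfull : ∀ x : ℤ, g ∣ x → x ∈ M := by
        intro x hx
        obtain ⟨k, rfl⟩ := hx
        have hxG : g * k ∈ G := by
          have := G.zsmul_mem hgG k
          rwa [zsmul_eq_mul, mul_comm] at this
        exact twosided_group M hx₁ hx₂ hx₁p hx₂n _ hxG
      exact ⟨g, 1, 0, hgpos, Or.inl rfl, hdvd,
        fun n _ => by rw [one_mul]; exact hfull _ ⟨n, rfl⟩, Or.inl hfull⟩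
    · -- one-sided positive
      push_neg at hneg
      have hnn : ∀ x ∈ M, 0 ≤ x := fun x hx => hneg x hx
      obtain ⟨N, hN⟩ := onesided_large_multiples M g hgpos hgG hdvd hnn
      exact ⟨g, 1, N, hgpos, Or.inl rfl, hdvd,
        fun n hn => by rw [one_mul]; exact hN n hn,
        Or.inr (fun x hx => by rw [one_mul]; exact hnn x hx)⟩
  · -- one-sided negative (or zero)
    push_neg at hpos
    have hnp : ∀ x ∈ M, x ≤ 0 := fun x hx => hpos x hx
    set f : ℤ →+ ℤ := AddMonoidHom.mk' (fun x => -x) (by intro a b; ring) with hf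
    set M' := AddSubmonoid.map f M with hM'
    have hmemM' : ∀ x, x ∈ M' ↔ -x ∈ M := by
      intro x
      constructor
      · rintro ⟨y, hy, rfl⟩
        simpa [hf] using hy
      · intro hx
        exact ⟨-x, hx, by simp [hf]⟩
    have hnn' : ∀ x ∈ M', 0 ≤ x := by
      intro x hx
      have := hnp _ ((hmemM' x).mp hx)
      omega
    have hdvd' : ∀ x ∈ M', g ∣ x := by
      intro x hx
      have := hdvd _ ((hmemM' x).mp hx)
      exact (dvd_neg.mp this)
    have hgG' : g ∈ AddSubgroup.closure (M' : Set ℤ) := by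
      obtain ⟨m₁, h₁, m₂, h₂, hd⟩ := subgroup_closure_diff M g hgG
      have h₁' : -m₁ ∈ M' := (hmemM' _).mpr (by rwa [neg_neg])
      have h₂' : -m₂ ∈ M' := (hmemM' _).mpr (by rwa [neg_neg])
      have : g = -m₂ - -m₁ := by omega
      rw [this]
      exact AddSubgroup.sub_mem _ (AddSubgroup.subset_closure h₂') (AddSubgroup.subset_closure h₁')
    obtain ⟨N, hN⟩ := onesided_large_multiples M' g hgpos hgG' hdvd' hnn'
    refine ⟨g, -1, N, hgpos, Or.inr rfl, hdvd, fun n hn => ?_, Or.inr fun x hx => ?_⟩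
    · have := (hmemM' _).mp (hN n hn)
      rwa [show (-1 : ℤ) * (g * n) = -(g * n) by ring]
    · have := hnp x hx
      omega

/-- every submonoid of ℤ is generated by a finite subset -/
lemma int_submonoid_fg (M : AddSubmonoid ℤ) :
    ∃ S : Finset ℤ, (↑S : Set ℤ) ⊆ (M : Set ℤ) ∧
      ∀ x ∈ M, x ∈ AddSubmonoid.closure (S : Set ℤ) := by
  classical
  by_cases hM : ∃ x ∈ M, x ≠ 0
  swap
  · refine ⟨∅, by simp, fun x hx => ?_⟩
    push_neg at hM
    rw [hM x hx]
    exact AddSubmonoid.zero_mem _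
  obtain ⟨g, ε, N, hgpos, hε, hdvd, hL, hcase⟩ := int_submonoid_structure M hM
  rcases hcase with hfull | hb
  · -- two-sided: S = {g, -g}
    refine ⟨{g, -g}, ?_, fun x hx => ?_⟩
    · intro y hy
      simp only [Finset.coe_insert, Finset.coe_singleton, Set.mem_insert_iff,
        Set.mem_singleton_iff] at hy
      rcases hy with rfl | rfl
      · exact hfull _ (dvd_refl _)
      · exact hfull _ (dvd_neg.mpr (dvd_refl _))
    · obtain ⟨k, rfl⟩ := hdvd x hx
      have hgc : g ∈ AddSubmonoid.closure ({g, -g} : Finset ℤ) :=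
        AddSubmonoid.subset_closure (by simp)
      have hgc' : -g ∈ AddSubmonoid.closure ({g, -g} : Finset ℤ) :=
        AddSubmonoid.subset_closure (by simp)
      rcases le_or_gt 0 k with hk | hk
      · have := AddSubmonoid.nsmul_mem _ hgc k.toNat
        rwa [nsmul_eq_mul, Int.toNat_of_nonneg hk, mul_comm] at this
      · have := AddSubmonoid.nsmul_mem _ hgc' (-k).toNat
        rw [nsmul_eq_mul, Int.toNat_of_nonneg (by omega)] at this
        rwa [show (-k) * (-g) = g * k by ring] at this
  · -- one-sided
    have hε2 : ε * ε = 1 := by rcases hε with rfl | rfl <;> ring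
    have hεabs : ∀ y : ℤ, 0 ≤ ε * y → ε * y = |y| := by
      intro y hy
      rcases hε with rfl | rfl
      · rw [one_mul] at hy ⊢; exact (abs_of_nonneg hy).symm
      · rw [neg_one_mul] at hy ⊢; rw [abs_of_nonpos (by omega)]
    set B : ℤ := g * (2 * N + 2) with hB
    set S : Finset ℤ := (Finset.Icc (-B) B).filter (· ∈ M) with hS
    have hSM : (↑S : Set ℤ) ⊆ (M : Set ℤ) := by
      intro y hy
      simp only [hS, Finset.coe_filter, Set.mem_setOf_eq] at hy
      exact hy.2
    refine ⟨S, hSM, fun x hx => ?_⟩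
    have main : ∀ n : ℕ, ∀ x ∈ M, x.natAbs = n → x ∈ AddSubmonoid.closure (S : Set ℤ) := by
      intro n
      induction n using Nat.strong_induction_on with
      | _ n IH =>
        intro x hx hxn
        by_cases hsmall : |x| ≤ B
        · refine AddSubmonoid.subset_closure ?_
          simp only [hS, Finset.coe_filter, Set.mem_setOf_eq, Finset.mem_Icc]
          exact ⟨by rw [abs_le] at hsmall; omega, hx⟩
        · push_neg at hsmall
          obtain ⟨k0, hk0⟩ := hdvd x hx
          set k : ℤ := ε * k0 with hk
          have hxk : x = ε * (g * k) := by
            rw [hk, hk0]; rcases hε with rfl | rfl <;> ring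
          have hεx : ε * x = g * k := by
            rw [hxk]; rcases hε with rfl | rfl <;> ring
          have hknn : 0 ≤ k := by
            have := hb x hx
            rw [hεx] at this
            nlinarith
          have habs : g * k = |x| := by rw [← hεx]; exact hεabs x (hb x hx)
          have hklarge : 2 * N + 2 < k := by nlinarith
          set y : ℤ := ε * (g * (N + 1)) with hy
          set z : ℤ := ε * (g * (k - (N + 1))) with hz
          have hyM : y ∈ M := by
            have := hL (N + 1) (by omega)
            rw [hy]; push_cast at this ⊢; exact this
          have hzM : z ∈ M := by
            have := hL (k - (N + 1)).toNat (by omega)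
            rw [Int.toNat_of_nonneg (by omega)] at this
            rw [hz]; exact this
          have hxyz : x = y + z := by rw [hxk, hy, hz]; ring
          have hεone : |ε| = 1 := by rcases hε with rfl | rfl <;> simp
          have hyabs : |y| = g * (N + 1) := by
            rw [hy, abs_mul, abs_mul, hεone, one_mul, abs_of_pos hgpos,
              abs_of_nonneg (by positivity : (0:ℤ) ≤ (N:ℤ) + 1)]
          have hyS : y ∈ S := by
            simp only [hS, Finset.mem_filter, Finset.mem_Icc]
            refine ⟨?_, hyM⟩
            have h1 : |y| ≤ B := by rw [hyabs, hB]; nlinarith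
            exact abs_le.mp h1
          have hzsmall : z.natAbs < n := by
            have habsz : |z| = g * (k - (N + 1)) := by
              rw [hz, abs_mul, abs_mul, hεone, one_mul, abs_of_pos hgpos,
                abs_of_nonneg (by omega : (0:ℤ) ≤ k - ((N:ℤ) + 1))]
            have h1 : |z| < |x| := by rw [habsz, ← habs]; nlinarith [hgpos, hklarge]
            have e1 : |z| = (z.natAbs : ℤ) := Int.abs_eq_natAbs z
            have e2 : |x| = (x.natAbs : ℤ) := Int.abs_eq_natAbs x
            omega
          rw [hxyz]
          exact AddSubmonoid.add_mem _ (AddSubmonoid.subset_closure hyS)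
            (IH z.natAbs hzsmall z hzM rfl)
    exact main x.natAbs x hx rfl

section rearrange
variable {κ : Type} [Fintype κ] [DecidableEq κ] {V : Type*} [AddCommMonoid V]

lemma rearrange (w : κ → ℕ) (b : κ × κ → ℕ) (r n : κ → ℕ) (f : κ → V)
    (heq : ∀ t, n t = r t + (∑ k, b (t, k) * w k) + (∑ i, b (i, t) * w i)) :
    ∑ j, n j • f j =
      (∑ j, r j • f j) + ∑ q : κ × κ, b q • (w q.2 • f q.1 + w q.1 • f q.2) := by
  have step1 : ∀ j, n j • f j =
      r j • f j + (∑ k, (b (j, k) * w k) • f j) + (∑ i, (b (i, j) * w i) • f j) := by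
    intro j
    rw [heq j, add_smul, add_smul, Finset.sum_smul, Finset.sum_smul]
  calc ∑ j, n j • f j
      = ∑ j, (r j • f j + (∑ k, (b (j, k) * w k) • f j) + (∑ i, (b (i, j) * w i) • f j)) :=
        Finset.sum_congr rfl fun j _ => step1 j
    _ = (∑ j, r j • f j) + (∑ j, ∑ k, (b (j, k) * w k) • f j)
          + (∑ j, ∑ i, (b (i, j) * w i) • f j) := by
        rw [Finset.sum_add_distrib, Finset.sum_add_distrib]
    _ = (∑ j, r j • f j) + (∑ q : κ × κ, (b q * w q.2) • f q.1)
          + (∑ q : κ × κ, (b q * w q.1) • f q.2) := by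
        rw [Fintype.sum_prod_type (f := fun q : κ × κ => (b q * w q.2) • f q.1),
          Fintype.sum_prod_type (f := fun q : κ × κ => (b q * w q.1) • f q.2)]
        rw [Finset.sum_comm (f := fun i j => (b (i, j) * w i) • f j)]
    _ = (∑ j, r j • f j) + ∑ q : κ × κ, b q • (w q.2 • f q.1 + w q.1 • f q.2) := by
        rw [add_assoc, ← Finset.sum_add_distrib]
        congr 1
        refine Finset.sum_congr rfl fun q _ => ?_
        rw [smul_add, smul_smul, smul_smul]

/-- decomposition into blocks plus a small remainder -/
lemma decompose (p : κ → ℤ) (n : κ → ℕ) :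
    ∃ (b : κ × κ → ℕ) (r : κ → ℕ),
      (∀ q : κ × κ, ¬(0 < p q.1 ∧ p q.2 < 0) → b q = 0) ∧
      (∀ t, n t = r t + (∑ k, b (t, k) * (p k).natAbs) + (∑ i, b (i, t) * (p i).natAbs)) ∧
      ((∑ j, if 0 < p j then r j * (p j).natAbs else 0) ≤
          Fintype.card κ * (Finset.univ.sup fun j => (p j).natAbs) *
            (Finset.univ.sup fun j => (p j).natAbs) ∨
        (∑ j, if p j < 0 then r j * (p j).natAbs else 0) ≤
          Fintype.card κ * (Finset.univ.sup fun j => (p j).natAbs) *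
            (Finset.univ.sup fun j => (p j).natAbs)) := by
  classical
  set Q := Finset.univ.sup fun j => (p j).natAbs with hQ
  have hQb : ∀ j, (p j).natAbs ≤ Q := fun j => Finset.le_sup (f := fun j => (p j).natAbs) (Finset.mem_univ j)
  set B₁ := Fintype.card κ * Q * Q with hB₁
  -- strong induction on total count
  suffices h : ∀ (s : ℕ) (n : κ → ℕ), (∑ t, n t) = s → ∃ (b : κ × κ → ℕ) (r : κ → ℕ),
      (∀ q : κ × κ, ¬(0 < p q.1 ∧ p q.2 < 0) → b q = 0) ∧
      (∀ t, n t = r t + (∑ k, b (t, k) * (p k).natAbs) + (∑ i, b (i, t) * (p i).natAbs)) ∧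
      ((∑ j, if 0 < p j then r j * (p j).natAbs else 0) ≤ B₁ ∨
        (∑ j, if p j < 0 then r j * (p j).natAbs else 0) ≤ B₁) by
    exact h (∑ t, n t) n rfl
  intro s
  induction s using Nat.strong_induction_on with
  | _ s IH =>
    intro n hns
    by_cases hex : ∃ q : κ × κ, 0 < p q.1 ∧ p q.2 < 0 ∧ (p q.2).natAbs ≤ n q.1 ∧
        (p q.1).natAbs ≤ n q.2
    · obtain ⟨⟨j₀, k₀⟩, hj₀, hk₀, hnj, hnk⟩ := hex
      dsimp only at hj₀ hk₀ hnj hnk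
      have hjk : j₀ ≠ k₀ := by
        intro h; rw [h] at hj₀; omega
      set n₁ : κ → ℕ := fun t =>
        n t - (if t = j₀ then (p k₀).natAbs else 0) - (if t = k₀ then (p j₀).natAbs else 0)
        with hn₁
      have hpj₀ : 0 < (p j₀).natAbs := by omega
      have hpk₀ : 0 < (p k₀).natAbs := by omega
      have hsum₁ : (∑ t, n₁ t) < s := by
        rw [← hns]
        have h1 : ∀ t, n₁ t ≤ n t := by
          intro t; simp only [hn₁]; omega
        have h2 : n₁ j₀ < n j₀ := by
          have e1 : n₁ j₀ = n j₀ - (p k₀).natAbs := by simp [hn₁, hjk]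
          omega
        exact Finset.sum_lt_sum (fun t _ => h1 t) ⟨j₀, Finset.mem_univ _, h2⟩
      obtain ⟨b, r, hb0, heq, hbd⟩ := IH _ hsum₁ n₁ rfl
      set bnew : κ × κ → ℕ := fun q => b q + (if q = (j₀, k₀) then 1 else 0) with hbnew
      refine ⟨bnew, r, ?_, ?_, hbd⟩
      · intro q hq
        have h1 := hb0 q hq
        have h2 : q ≠ (j₀, k₀) := by rintro rfl; exact hq ⟨hj₀, hk₀⟩
        simp [hbnew, h1, h2]
      · intro t
        simp only [hbnew]
        have h1 := heq t
        have hs1 : (∑ k, (b (t, k) + if (t, k) = (j₀, k₀) then 1 else 0) * (p k).natAbs) =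
            (∑ k, b (t, k) * (p k).natAbs) + (if t = j₀ then (p k₀).natAbs else 0) := by
          rw [Finset.sum_congr rfl (fun k _ => add_mul _ _ _), Finset.sum_add_distrib]
          congr 1
          have he : ∀ k, (if (t, k) = (j₀, k₀) then 1 else 0) * (p k).natAbs =
              if k = k₀ ∧ t = j₀ then (p k₀).natAbs else 0 := by
            intro k
            by_cases hh1 : t = j₀ <;> by_cases hh2 : k = k₀ <;>
              simp [Prod.ext_iff, hh1, hh2]
          rw [Finset.sum_congr rfl fun k _ => he k]
          by_cases hh1 : t = j₀ <;> simp [hh1]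
        have hs2 : (∑ i, (b (i, t) + if (i, t) = (j₀, k₀) then 1 else 0) * (p i).natAbs) =
            (∑ i, b (i, t) * (p i).natAbs) + (if t = k₀ then (p j₀).natAbs else 0) := by
          rw [Finset.sum_congr rfl (fun i _ => add_mul _ _ _), Finset.sum_add_distrib]
          congr 1
          have he : ∀ i, (if (i, t) = (j₀, k₀) then 1 else 0) * (p i).natAbs =
              if i = j₀ ∧ t = k₀ then (p j₀).natAbs else 0 := by
            intro i
            by_cases hh1 : t = k₀ <;> by_cases hh2 : i = j₀ <;>
              simp [Prod.ext_iff, hh1, hh2]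
          rw [Finset.sum_congr rfl fun i _ => he i]
          by_cases hh1 : t = k₀ <;> simp [hh1]
        have hnt : n t = n₁ t + (if t = j₀ then (p k₀).natAbs else 0)
            + (if t = k₀ then (p j₀).natAbs else 0) := by
          rcases eq_or_ne t j₀ with rfl | hh1
          · rw [if_pos rfl, if_neg hjk]
            have e1 : n₁ t = n t - (p k₀).natAbs := by simp [hn₁, hjk]
            omega
          · rcases eq_or_ne t k₀ with rfl | hh2
            · rw [if_neg hh1, if_pos rfl]
              have e1 : n₁ t = n t - (p j₀).natAbs := by simp [hn₁, hh1]
              omega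
            · rw [if_neg hh1, if_neg hh2]
              have e1 : n₁ t = n t := by simp [hn₁, hh1, hh2]
              omega
        rw [hs1, hs2, hnt, h1]
        ring
    · push_neg at hex
      refine ⟨fun _ => 0, n, fun _ _ => rfl, ?_, ?_⟩
      · intro t; simp
      · by_cases hex2 : ∃ k, p k < 0 ∧ Q ≤ n k
        · obtain ⟨k₀, hk₀, hnk₀⟩ := hex2
          left
          calc (∑ j, if 0 < p j then n j * (p j).natAbs else 0)
              ≤ ∑ _j : κ, Q * Q := by
                refine Finset.sum_le_sum fun j _ => ?_
                split_ifs with hpj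
                · have hst := hex (j, k₀)
                  dsimp only at hst
                  have hnjb : n j < (p k₀).natAbs := by
                    by_contra hcon
                    push_neg at hcon
                    have h5 := hst hpj hk₀ hcon
                    have h6 := hQb j
                    omega
                  have h2 : n j ≤ Q := by have := hQb k₀; omega
                  exact Nat.mul_le_mul h2 (hQb j)
                · exact Nat.zero_le _
            _ = B₁ := by rw [Finset.sum_const, Finset.card_univ, hB₁, smul_eq_mul, Nat.mul_assoc]
        · push_neg at hex2
          right
          calc (∑ j, if p j < 0 then n j * (p j).natAbs else 0)
              ≤ ∑ _j : κ, Q * Q := by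
                refine Finset.sum_le_sum fun j _ => ?_
                split_ifs with hpj
                · exact Nat.mul_le_mul (le_of_lt (hex2 j hpj)) (hQb j)
                · exact Nat.zero_le _
            _ = B₁ := by rw [Finset.sum_const, Finset.card_univ, hB₁, smul_eq_mul, Nat.mul_assoc]

end rearrange

lemma vec_split {m : ℕ} (v : Fin (m+1) → ℤ) (h1 : projHom m v = 0)
    (h2 : v (Fin.last m) = 0) : v = 0 :=
  funext (Fin.lastCases h2 (fun i => congrFun h1 i))

lemma fm_lemma : ∀ (m : ℕ), ∀ (κ : Type) (_ : Fintype κ) (_ : DecidableEq κ),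
    ∀ (γ : κ → (Fin m → ℤ)) (a : κ → ℕ),
    (∀ n : κ → ℕ, (∑ j, n j • γ j) = 0 → (∑ j, n j * a j) = 0) →
    ∃ C : ℕ, ∀ n : κ → ℕ, (∑ j, n j * a j) ≤ C * (l1norm (∑ j, n j • γ j) + 1) := by
  intro m
  induction m with
  | zero =>
      intro κ _ _ γ a H
      refine ⟨0, fun n => ?_⟩
      have h0 : (∑ j, n j • γ j) = 0 := Subsingleton.elim _ _
      rw [H n h0]
      exact Nat.zero_le _
  | succ m IH =>
      intro κ _ _ γ a H
      classical
      set p : κ → ℤ := fun j => γ j (Fin.last m) with hp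
      set w : κ → ℕ := fun j => (p j).natAbs with hw
      set Γ' : κ ⊕ κ × κ → (Fin (m+1) → ℤ) :=
        Sum.elim (fun z => if p z = 0 then γ z else 0)
          (fun q => if 0 < p q.1 ∧ p q.2 < 0 then w q.2 • γ q.1 + w q.1 • γ q.2 else 0) with hΓ'
      set a' : κ ⊕ κ × κ → ℕ :=
        Sum.elim (fun z => if p z = 0 then a z else 0)
          (fun q => if 0 < p q.1 ∧ p q.2 < 0 then w q.2 * a q.1 + w q.1 * a q.2 else 0) with ha'
      set γ' : κ ⊕ κ × κ → (Fin m → ℤ) := fun t => projHom m (Γ' t) with hγ'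
      -- last coordinate of Γ' vanishes
      have hlast : ∀ t, Γ' t (Fin.last m) = 0 := by
        rintro (z | q)
        · simp only [hΓ', Sum.elim_inl]
          split_ifs with h
          · exact h
          · rfl
        · simp only [hΓ', Sum.elim_inr]
          split_ifs with h
          · have e1 : (w q.1 : ℤ) = p q.1 := Int.natAbs_of_nonneg (le_of_lt h.1)
            have e2 : (w q.2 : ℤ) = -p q.2 := by
              simp only [hw]; omega
            have hg1 : γ q.1 (Fin.last m) = p q.1 := rfl
            have hg2 : γ q.2 (Fin.last m) = p q.2 := rfl
            rw [Pi.add_apply, Pi.smul_apply, Pi.smul_apply, nsmul_eq_mul, nsmul_eq_mul,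
              hg1, hg2, e1, e2]
            ring
          · rfl
      -- last coordinate of a ℕ-combination of the γ's
      have hlastsum : ∀ nn : κ → ℕ, ((∑ j, nn j • γ j) (Fin.last m)) =
          ((∑ j, if 0 < p j then nn j * w j else 0 : ℕ) : ℤ) -
          ((∑ j, if p j < 0 then nn j * w j else 0 : ℕ) : ℤ) := by
        intro nn
        rw [Finset.sum_apply]
        have hterm : ∀ j, (nn j • γ j) (Fin.last m) =
            ((if 0 < p j then nn j * w j else 0 : ℕ) : ℤ) -
            ((if p j < 0 then nn j * w j else 0 : ℕ) : ℤ) := by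
          intro j
          have hγp : γ j (Fin.last m) = p j := rfl
          simp only [Pi.smul_apply, nsmul_eq_mul, hγp]
          rcases lt_trichotomy (p j) 0 with h | h | h
          · rw [if_neg (by omega), if_pos h]
            have e2 : (w j : ℤ) = -p j := by simp only [hw]; omega
            push_cast
            rw [e2]
            ring
          · rw [if_neg (by omega), if_neg (by omega), h]
            simp
          · rw [if_pos h, if_neg (by omega)]
            have e2 : (w j : ℤ) = p j := by simp only [hw]; omega
            push_cast
            rw [e2]
            ring
        rw [Finset.sum_congr rfl (fun j _ => hterm j), Finset.sum_sub_distrib]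
        push_cast
        ring
      -- the new system satisfies the kernel hypothesis
      have H' : ∀ n' : κ ⊕ κ × κ → ℕ, (∑ t, n' t • γ' t) = 0 → (∑ t, n' t * a' t) = 0 := by
        intro n' hn'
        set rz : κ → ℕ := fun z => if p z = 0 then n' (Sum.inl z) else 0 with hrz
        set b0 : κ × κ → ℕ := fun q => if 0 < p q.1 ∧ p q.2 < 0 then n' (Sum.inr q) else 0
          with hb0'
        set N : κ → ℕ := fun j => rz j + (∑ k, b0 (j, k) * w k) + (∑ i, b0 (i, j) * w i) with hN
        have hre := rearrange w b0 rz N γ (fun t => rfl)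
        have hre2 := rearrange (V := ℕ) w b0 rz N a (fun t => rfl)
        -- Σ N•γ = Σ n'•Γ'
        have hmatch : (∑ t, n' t • Γ' t) = ∑ j, N j • γ j := by
          rw [Fintype.sum_sum_type, hre]
          congr 1
          · refine Finset.sum_congr rfl fun z _ => ?_
            simp only [hΓ', Sum.elim_inl, hrz]
            split_ifs with h
            · rfl
            · rw [zero_smul, smul_zero]
          · refine Finset.sum_congr rfl fun q _ => ?_
            simp only [hΓ', Sum.elim_inr, hb0']
            split_ifs with h
            · rfl
            · rw [zero_smul, smul_zero]
        have hmatch2 : (∑ t, n' t * a' t) = ∑ j, N j * a j := by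
          have hre2' : (∑ j, N j * a j) =
              (∑ j, rz j * a j) + ∑ q : κ × κ, b0 q * (w q.2 * a q.1 + w q.1 * a q.2) := by
            simpa [smul_eq_mul] using hre2
          rw [Fintype.sum_sum_type, hre2']
          congr 1
          · refine Finset.sum_congr rfl fun z _ => ?_
            simp only [ha', Sum.elim_inl, hrz]
            split_ifs with h <;> ring
          · refine Finset.sum_congr rfl fun q _ => ?_
            simp only [ha', Sum.elim_inr, hb0']
            split_ifs with h <;> ring
        -- the full (m+1)-dimensional combination vanishes
        have hW : (∑ t, n' t • Γ' t) = 0 := by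
          refine vec_split _ ?_ ?_
          · rw [map_sum]
            rw [← hn']
            refine Finset.sum_congr rfl fun t _ => ?_
            rw [map_nsmul]
          · rw [Finset.sum_apply]
            refine Finset.sum_eq_zero fun t _ => ?_
            simp only [Pi.smul_apply, hlast t, smul_zero]
        rw [hmatch2]
        exact H N (by rw [← hmatch, hW])
      obtain ⟨C₂, hC₂⟩ := IH (κ ⊕ κ × κ) inferInstance inferInstance γ' a' H'
      set Q := Finset.univ.sup fun j => (p j).natAbs with hQ
      set B₁ := Fintype.card κ * Q * Q with hB₁
      set Amax := Finset.univ.sup a with hAmax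
      set Gmax := Finset.univ.sup fun j => l1norm (γ j) with hGmax
      refine ⟨C₂ * (1 + (2 * B₁ + 1) * Gmax) + (2 * B₁ + 1) * Amax, fun n => ?_⟩
      obtain ⟨b, r, hbz, heqD, hbd⟩ := decompose p n
      set V := l1norm (∑ j, n j • γ j) with hV
      set r₀ : κ → ℕ := fun t => if p t = 0 then 0 else r t with hr₀
      set rz : κ → ℕ := fun t => if p t = 0 then r t else 0 with hrz
      set n' : κ ⊕ κ × κ → ℕ := Sum.elim rz b with hn'
      -- identity I
      have hI : (∑ j, n j • γ j) = (∑ t, n' t • Γ' t) + ∑ j, r₀ j • γ j := by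
        rw [rearrange w b r n γ heqD, Fintype.sum_sum_type]
        have e1 : (∑ j, r j • γ j) = (∑ z, rz z • Γ' (Sum.inl z)) + ∑ j, r₀ j • γ j := by
          rw [← Finset.sum_add_distrib]
          refine Finset.sum_congr rfl fun z _ => ?_
          simp only [hΓ', Sum.elim_inl, hrz, hr₀]
          split_ifs with h
          · rw [zero_smul, add_zero]
          · rw [zero_smul, zero_add]
        have e2 : (∑ q : κ × κ, b q • (w q.2 • γ q.1 + w q.1 • γ q.2)) =
            ∑ q : κ × κ, b q • Γ' (Sum.inr q) := by
          refine Finset.sum_congr rfl fun q _ => ?_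
          simp only [hΓ', Sum.elim_inr]
          split_ifs with h
          · rfl
          · rw [hbz q h, zero_smul, zero_smul]
        rw [e1, e2]
        simp only [hn', Sum.elim_inl, Sum.elim_inr]
        abel
      -- identity II
      have hII : (∑ j, n j * a j) = (∑ t, n' t * a' t) + ∑ j, r₀ j * a j := by
        have hre2 := rearrange (V := ℕ) w b r n a heqD
        simp only [smul_eq_mul] at hre2
        rw [hre2, Fintype.sum_sum_type]
        have e1 : (∑ j, r j * a j) = (∑ z, rz z * a' (Sum.inl z)) + ∑ j, r₀ j * a j := by
          rw [← Finset.sum_add_distrib]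
          refine Finset.sum_congr rfl fun z _ => ?_
          simp only [ha', Sum.elim_inl, hrz, hr₀]
          split_ifs with h <;> simp
        have e2 : (∑ q : κ × κ, b q * (w q.2 * a q.1 + w q.1 * a q.2)) =
            ∑ q : κ × κ, b q * a' (Sum.inr q) := by
          refine Finset.sum_congr rfl fun q _ => ?_
          simp only [ha', Sum.elim_inr]
          split_ifs with h
          · rfl
          · rw [hbz q h, zero_mul, zero_mul]
        rw [e1, e2]
        simp only [hn', Sum.elim_inl, Sum.elim_inr]
        ring
      -- remainder bounds
      set SP := (∑ j, if 0 < p j then r j * w j else 0) with hSP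
      set SM := (∑ j, if p j < 0 then r j * w j else 0) with hSM
      have hr₀SP : (∑ j, if 0 < p j then r₀ j * w j else 0) = SP := by
        refine Finset.sum_congr rfl fun j _ => ?_
        simp only [hr₀]
        split_ifs with h1 h2
        · omega
        · rfl
        · rfl
      have hr₀SM : (∑ j, if p j < 0 then r₀ j * w j else 0) = SM := by
        refine Finset.sum_congr rfl fun j _ => ?_
        simp only [hr₀]
        split_ifs with h1 h2
        · omega
        · rfl
        · rfl
      -- the last coordinate of the original sum
      have hW'last : (∑ t, n' t • Γ' t) (Fin.last m) = 0 := by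
        rw [Finset.sum_apply]
        refine Finset.sum_eq_zero fun t _ => ?_
        simp only [Pi.smul_apply, hlast t, smul_zero]
      have hlasteq : ((∑ j, n j • γ j) (Fin.last m)) = (SP : ℤ) - SM := by
        have h1 : ((∑ j, n j • γ j) (Fin.last m)) = ((∑ j, r₀ j • γ j) (Fin.last m)) := by
          rw [hI, Pi.add_apply, hW'last, zero_add]
        rw [h1, hlastsum r₀, hr₀SP, hr₀SM]
      have hVlast : ((∑ j, n j • γ j) (Fin.last m)).natAbs ≤ V := l1norm_apply_le _ _
      have hSPSM : SP + SM ≤ 2 * B₁ + V := by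
        have h2 : ((SP : ℤ) - SM).natAbs ≤ V := by rw [← hlasteq]; exact hVlast
        have hbd' : SP ≤ B₁ ∨ SM ≤ B₁ := hbd
        rcases hbd' with h | h <;> omega
      set R := ∑ j, r₀ j with hR
      have hRb : R ≤ SP + SM := by
        rw [hR, ← hr₀SP, ← hr₀SM, ← Finset.sum_add_distrib]
        refine Finset.sum_le_sum fun j _ => ?_
        simp only [hr₀, hw]
        rcases lt_trichotomy (p j) 0 with h | h | h
        · rw [if_neg (by omega), if_neg (by omega), if_pos h]
          have : 1 ≤ (p j).natAbs := by omega
          nlinarith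
        · simp [h]
        · rw [if_neg (by omega), if_pos h, if_neg (by omega)]
          have : 1 ≤ (p j).natAbs := by omega
          nlinarith
      have hrem_a : (∑ j, r₀ j * a j) ≤ R * Amax := by
        rw [hR, Finset.sum_mul]
        refine Finset.sum_le_sum fun j _ => ?_
        exact Nat.mul_le_mul_left _ (Finset.le_sup (f := a) (Finset.mem_univ j))
      have hrem_γ : l1norm (∑ j, r₀ j • γ j) ≤ R * Gmax := by
        calc l1norm (∑ j, r₀ j • γ j) ≤ ∑ j, l1norm (r₀ j • γ j) := l1norm_sum_le _ _
          _ = ∑ j, r₀ j * l1norm (γ j) := Finset.sum_congr rfl fun j _ => l1norm_nsmul _ _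
          _ ≤ ∑ j, r₀ j * Gmax := Finset.sum_le_sum fun j _ =>
              Nat.mul_le_mul_left _ (Finset.le_sup (f := fun j => l1norm (γ j)) (Finset.mem_univ j))
          _ = R * Gmax := by rw [hR, Finset.sum_mul]
      -- bound for the projected system
      have hIH := hC₂ n'
      have hγ'W : (∑ t, n' t • γ' t) = projHom m (∑ t, n' t • Γ' t) := by
        rw [map_sum]
        refine Finset.sum_congr rfl fun t _ => ?_
        rw [map_nsmul]
      have hl1W : l1norm (∑ t, n' t • γ' t) ≤ V + R * Gmax := by
        rw [hγ'W]
        refine le_trans (l1norm_projHom_le m _) ?_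
        have hWeq : (∑ t, n' t • Γ' t) = (∑ j, n j • γ j) + (-(∑ j, r₀ j • γ j)) := by
          rw [hI]; abel
        rw [hWeq]
        calc l1norm ((∑ j, n j • γ j) + (-(∑ j, r₀ j • γ j)))
            ≤ V + l1norm (-(∑ j, r₀ j • γ j)) := l1norm_add_le _ _
          _ = V + l1norm (∑ j, r₀ j • γ j) := by rw [l1norm_neg]
          _ ≤ V + R * Gmax := Nat.add_le_add_left hrem_γ _
      -- put everything together
      have hfin1 : (∑ t, n' t * a' t) ≤ C₂ * (V + R * Gmax + 1) :=
        le_trans hIH (Nat.mul_le_mul_left _ (by omega))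
      have hRV : R ≤ 2 * B₁ + V := le_trans hRb hSPSM
      calc (∑ j, n j * a j) = (∑ t, n' t * a' t) + ∑ j, r₀ j * a j := hII
        _ ≤ C₂ * (V + R * Gmax + 1) + R * Amax := Nat.add_le_add hfin1 hrem_a
        _ ≤ C₂ * (V + (2 * B₁ + V) * Gmax + 1) + (2 * B₁ + V) * Amax := by
            have h1 : R * Gmax ≤ (2 * B₁ + V) * Gmax := Nat.mul_le_mul_right _ hRV
            have h2 : R * Amax ≤ (2 * B₁ + V) * Amax := Nat.mul_le_mul_right _ hRV
            have h3 : C₂ * (V + R * Gmax + 1) ≤ C₂ * (V + (2 * B₁ + V) * Gmax + 1) :=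
              Nat.mul_le_mul_left _ (by omega)
            omega
        _ ≤ C₂ * (V + ((2 * B₁ + 1) * (V + 1)) * Gmax + 1) + ((2 * B₁ + 1) * (V + 1)) * Amax := by
            have key : (2 * B₁ + V) ≤ (2 * B₁ + 1) * (V + 1) := by nlinarith
            have h1 : (2 * B₁ + V) * Gmax ≤ ((2 * B₁ + 1) * (V + 1)) * Gmax :=
              Nat.mul_le_mul_right _ key
            have h2 : (2 * B₁ + V) * Amax ≤ ((2 * B₁ + 1) * (V + 1)) * Amax :=
              Nat.mul_le_mul_right _ key
            have h3 : C₂ * (V + (2 * B₁ + V) * Gmax + 1) ≤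
                C₂ * (V + ((2 * B₁ + 1) * (V + 1)) * Gmax + 1) :=
              Nat.mul_le_mul_left _ (by omega)
            omega
        _ = (C₂ * (1 + (2 * B₁ + 1) * Gmax) + (2 * B₁ + 1) * Amax) * (V + 1) := by ring


lemma natAbs_sum_le {β : Type*} (s : Finset β) (f : β → ℤ) :
    (∑ b ∈ s, f b).natAbs ≤ ∑ b ∈ s, (f b).natAbs := by
  classical
  induction s using Finset.induction with
  | empty => simp
  | insert _ _ h ih =>
      rw [Finset.sum_insert h, Finset.sum_insert h]
      exact le_trans (Int.natAbs_add_le _ _) (Nat.add_le_add_left ih _)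

/-- representation of a closure element by multiplicities on the generators -/
lemma rep_of_mem_closure {α : Type} [AddCommMonoid α] [DecidableEq α] (S : Finset α) (x : α)
    (hx : x ∈ AddSubmonoid.closure (S : Set α)) :
    ∃ cnt : {v // v ∈ S} → ℕ, x = ∑ v : {v // v ∈ S}, cnt v • (v : α) := by
  obtain ⟨l, hl, hsum⟩ := AddSubmonoid.exists_multiset_of_mem_closure hx
  refine ⟨fun v => l.count (v : α), ?_⟩
  have h1 : (∑ v : {v // v ∈ S}, l.count (v : α) • (v : α)) = ∑ a ∈ S, l.count a • a :=
    Finset.sum_coe_sort S (fun a => l.count a • a)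
  have h2 : (∑ a ∈ l.toFinset, l.count a • a) = ∑ a ∈ S, l.count a • a := by
    refine Finset.sum_subset ?_ ?_
    · intro a ha
      exact hl a (Multiset.mem_toFinset.mp ha)
    · intro a _ ha
      rw [Multiset.count_eq_zero_of_notMem (fun hc => ha (Multiset.mem_toFinset.mpr hc))]
      exact zero_smul _ _
  have h3 : l.sum = ∑ a ∈ l.toFinset, l.count a • a := by
    conv_lhs => rw [← Multiset.toFinset_sum_count_nsmul_eq l]
    rw [← Multiset.coe_sumAddMonoidHom, map_sum]
    refine Finset.sum_congr rfl fun a _ => ?_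
    have e1 : Multiset.sumAddMonoidHom (l.count a • ({a} : Multiset α)) =
        l.count a • Multiset.sumAddMonoidHom ({a} : Multiset α) := map_nsmul _ _ _
    rw [e1]
    have e2 : Multiset.sumAddMonoidHom ({a} : Multiset α) = ({a} : Multiset α).sum := rfl
    rw [e2, Multiset.sum_singleton]
  rw [h1, ← h2, ← h3, hsum]

set_option maxHeartbeats 1000000 in
/-- For a primitive cone `K ⊆ ℤ^ι` (with respect to the standard basis, with all
coordinate pieces nonzero) and a linear map `d : ℤ^ι → ℤ^m` there is a constant
`C > 0` such that every `ξ ∈ K` can be corrected, by zeroing some coordinates and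
adding an element of `K`, to an element of `ker d`, with total change of ℓ¹ norm
at most `C·‖d(ξ)‖₁`. -/
theorem primitive_cone_correction
    (ι : Type) [Fintype ι] [DecidableEq ι] (m : ℕ)
    (K : AddSubmonoid (ι → ℤ))
    (hprim : ∀ ξ ∈ K, ∀ i : ι, (Pi.single i (ξ i) : ι → ℤ) ∈ K)
    (hnonzero : ∀ i : ι, ∃ ξ ∈ K, ξ i ≠ 0)
    (d : (ι → ℤ) →+ (Fin m → ℤ)) :
    ∃ C : ℝ, 0 < C ∧ ∀ ξ ∈ K, ∃ ξ' ∈ K, ∃ η ∈ K,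
      (∀ i : ι, ξ' i = ξ i ∨ ξ' i = 0) ∧
      d (ξ' + η) = 0 ∧
      (l1norm (ξ - ξ') : ℝ) ≤ C * l1norm (d ξ) ∧
      (l1norm η : ℝ) ≤ C * l1norm (d ξ) := by
  classical
  -- coordinate monoids
  set Mi : ι → AddSubmonoid ℤ := fun i =>
    { carrier := {a | (Pi.single i a : ι → ℤ) ∈ K}
      zero_mem' := by simp only [Set.mem_setOf_eq, Pi.single_zero]; exact K.zero_mem
      add_mem' := by
        intro a b ha hb
        simp only [Set.mem_setOf_eq] at *
        rw [Pi.single_add]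
        exact K.add_mem ha hb } with hMi
  have hMi_mem : ∀ i (a : ℤ), a ∈ Mi i ↔ (Pi.single i a : ι → ℤ) ∈ K := fun i a => Iff.rfl
  have hcoord : ∀ ξ ∈ K, ∀ i, ξ i ∈ Mi i := fun ξ hξ i => hprim ξ hξ i
  have hmem_of_coords : ∀ v : ι → ℤ, (∀ i, v i ∈ Mi i) → v ∈ K := by
    intro v hv
    rw [← Finset.univ_sum_single v]
    exact AddSubmonoid.sum_mem K (fun i _ => hv i)
  have hMi_ne : ∀ i, ∃ x ∈ Mi i, x ≠ 0 := by
    intro i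
    obtain ⟨ξ, hξ, hne⟩ := hnonzero i
    exact ⟨ξ i, hcoord ξ hξ i, hne⟩
  -- structure data
  choose g ε N hgpos hε hdvd hLarge hcase using fun i => int_submonoid_structure (Mi i) (hMi_ne i)
  -- finite generation
  choose S hSsub hSgen using fun i => int_submonoid_fg (Mi i)
  set SK : Finset (ι → ℤ) :=
    Finset.univ.biUnion (fun i => (S i).image (fun y => (Pi.single i y : ι → ℤ))) with hSK
  have hSKK : ∀ v ∈ SK, v ∈ K := by
    intro v hv
    simp only [hSK, Finset.mem_biUnion, Finset.mem_image] at hv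
    obtain ⟨i, _, y, hy, rfl⟩ := hv
    exact (hMi_mem i y).mp (hSsub i hy)
  have hSKMi : ∀ v ∈ SK, ∀ i, v i ∈ Mi i := fun v hv i => hcoord v (hSKK v hv) i
  have hgen : ∀ ξ ∈ K, ξ ∈ AddSubmonoid.closure (SK : Set (ι → ℤ)) := by
    intro ξ hξ
    rw [← Finset.univ_sum_single ξ]
    refine AddSubmonoid.sum_mem _ (fun i _ => ?_)
    have h1 : ξ i ∈ AddSubmonoid.closure ((S i : Set ℤ)) := hSgen i (ξ i) (hcoord ξ hξ i)
    have h2 : (Pi.single i (ξ i) : ι → ℤ) ∈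
        (AddSubmonoid.closure ((S i : Set ℤ))).map (AddMonoidHom.single (fun _ => ℤ) i) :=
      ⟨ξ i, h1, rfl⟩
    rw [AddMonoidHom.map_mclosure] at h2
    refine AddSubmonoid.closure_mono ?_ h2
    intro y hy
    obtain ⟨z, hz, rfl⟩ := hy
    simp only [hSK, Finset.coe_biUnion, Finset.coe_univ, Set.mem_iUnion, Finset.coe_image,
      Set.mem_image, Finset.mem_coe]
    exact ⟨i, trivial, z, hz, rfl⟩
  -- the face F
  set Ksupp : ι → Prop := fun i => ∃ ρ ∈ K, d ρ = 0 ∧ ρ i ≠ 0 with hKsupp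
  set twoSided : ι → Prop := fun i => ∀ x : ℤ, g i ∣ x → x ∈ Mi i with htwoSidedDef
  set inF : ι → Prop := fun i => twoSided i ∨ Ksupp i with hinF
  -- claim 1 : discarded coordinates are controlled
  have claim1 : ∃ C₁ : ℕ, ∀ ξ ∈ K, ∀ i, ¬ inF i →
      (ξ i).natAbs ≤ C₁ * (l1norm (d ξ) + 1) := by
    have hper : ∀ i : ι, ∃ Ci : ℕ, ∀ ξ ∈ K, ¬ inF i →
        (ξ i).natAbs ≤ Ci * (l1norm (d ξ) + 1) := by
      intro i
      by_cases hFi : inF i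
      · exact ⟨0, fun ξ _ h => absurd hFi h⟩
      have hsign : ∀ x ∈ Mi i, 0 ≤ ε i * x := by
        rcases hcase i with h | h
        · exact absurd (Or.inl h) hFi
        · exact h
      have hker : ∀ ρ ∈ K, d ρ = 0 → ρ i = 0 := by
        intro ρ hρ hdρ
        by_contra hne
        exact hFi (Or.inr ⟨ρ, hρ, hdρ, hne⟩)
      have hεne : (ε i) ≠ 0 := by rcases hε i with h | h <;> rw [h] <;> norm_num
      have hH : ∀ n : {v // v ∈ SK} → ℕ,
          (∑ v, n v • d (v : ι → ℤ)) = 0 → (∑ v, n v * ((v : ι → ℤ) i).natAbs) = 0 := by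
        intro n hn
        set ρ : ι → ℤ := ∑ v : {v // v ∈ SK}, n v • (v : ι → ℤ) with hρ
        have hρK : ρ ∈ K := AddSubmonoid.sum_mem K
          (fun v _ => AddSubmonoid.nsmul_mem K (hSKK _ v.2) _)
        have hdρ : d ρ = 0 := by
          rw [hρ, map_sum]
          rw [← hn]
          exact Finset.sum_congr rfl fun v _ => map_nsmul d _ _
        have hρi : ρ i = 0 := hker ρ hρK hdρ
        have hρi' : (∑ v : {v // v ∈ SK}, (n v : ℤ) * (v : ι → ℤ) i) = 0 := by
          rw [← hρi, hρ, Finset.sum_apply]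
          refine Finset.sum_congr rfl fun v _ => ?_
          rw [Pi.smul_apply, nsmul_eq_mul]
        have hterm : ∀ v : {v // v ∈ SK}, (n v : ℤ) * (v : ι → ℤ) i = 0 := by
          have hnn : ∀ v ∈ (Finset.univ : Finset {v // v ∈ SK}),
              0 ≤ ε i * ((n v : ℤ) * (v : ι → ℤ) i) := by
            intro v _
            have := hsign _ (hSKMi _ v.2 i)
            have hn0 : (0:ℤ) ≤ n v := Int.natCast_nonneg _
            nlinarith
          have hzero : (∑ v : {v // v ∈ SK}, ε i * ((n v : ℤ) * (v : ι → ℤ) i)) = 0 := by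
            rw [← Finset.mul_sum, hρi', mul_zero]
          intro v
          have := (Finset.sum_eq_zero_iff_of_nonneg hnn).mp hzero v (Finset.mem_univ v)
          rcases mul_eq_zero.mp this with h | h
          · exact absurd h hεne
          · exact h
        refine Finset.sum_eq_zero fun v _ => ?_
        rcases mul_eq_zero.mp (hterm v) with h | h
        · simp [Int.natCast_eq_zero.mp h]
        · simp [Int.natAbs_eq_zero.mpr h]
      obtain ⟨Ci, hCi⟩ := fm_lemma m {v // v ∈ SK} inferInstance inferInstance
        (fun v => d (v : ι → ℤ)) (fun v => ((v : ι → ℤ) i).natAbs) hH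
      refine ⟨Ci, fun ξ hξ _ => ?_⟩
      obtain ⟨cnt, hcnt⟩ := rep_of_mem_closure SK ξ (hgen ξ hξ)
      have hdξ : d ξ = ∑ v : {v // v ∈ SK}, cnt v • d (v : ι → ℤ) := by
        rw [hcnt, map_sum]
        exact Finset.sum_congr rfl fun v _ => map_nsmul d _ _
      have h1 : (ξ i).natAbs ≤ ∑ v : {v // v ∈ SK}, cnt v * ((v : ι → ℤ) i).natAbs := by
        have e1 : ξ i = ∑ v : {v // v ∈ SK}, (cnt v : ℤ) * (v : ι → ℤ) i := by
          rw [hcnt, Finset.sum_apply]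
          exact Finset.sum_congr rfl fun v _ => by rw [Pi.smul_apply, nsmul_eq_mul]
        rw [e1]
        refine le_trans (natAbs_sum_le _ _) (le_of_eq (Finset.sum_congr rfl fun v _ => ?_))
        rw [Int.natAbs_mul, Int.natAbs_natCast]
      refine le_trans h1 ?_
      rw [hdξ]
      exact hCi cnt
    choose Ci hCi using hper
    refine ⟨Finset.univ.sup Ci, fun ξ hξ i hi => ?_⟩
    refine le_trans (hCi i ξ hξ hi) (Nat.mul_le_mul_right _ ?_)
    exact Finset.le_sup (Finset.mem_univ i)
  obtain ⟨C₁, hC₁⟩ := claim1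
  -- the kernel element ρ with support controls
  have hρex : ∀ i : ι, ∃ ρi : ι → ℤ, (Ksupp i → ρi ∈ K ∧ d ρi = 0 ∧ ρi i ≠ 0) ∧
      (¬ Ksupp i → ρi = 0) := by
    intro i
    by_cases h : Ksupp i
    · obtain ⟨ρ0, h1, h2, h3⟩ := h
      exact ⟨ρ0, fun _ => ⟨h1, h2, h3⟩,
        fun hc => absurd (show Ksupp i from ⟨ρ0, h1, h2, h3⟩) hc⟩
    · exact ⟨0, fun hc => absurd hc h, fun _ => rfl⟩
  choose ρi hρi1 hρi2 using hρex
  set ρ : ι → ℤ := ∑ i, ρi i with hρdef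
  have hρiK : ∀ i, ρi i ∈ K := by
    intro i
    by_cases h : Ksupp i
    · exact (hρi1 i h).1
    · rw [hρi2 i h]; exact K.zero_mem
  have hρider : ∀ i, d (ρi i) = 0 := by
    intro i
    by_cases h : Ksupp i
    · exact (hρi1 i h).2.1
    · rw [hρi2 i h]; exact map_zero d
  have hρK : ρ ∈ K := AddSubmonoid.sum_mem K fun i _ => hρiK i
  have hρker : d ρ = 0 := by
    rw [hρdef, map_sum]
    exact Finset.sum_eq_zero fun i _ => hρider i
  have hρcoordK : ∀ i j, (ρi i) j ∈ Mi j := fun i j => hcoord _ (hρiK i) j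
  have hρMi : ∀ j, ρ j ∈ Mi j := fun j => hcoord ρ hρK j
  have hKsupp_of_ne : ∀ (x : ι → ℤ) j, x ∈ K → d x = 0 → x j ≠ 0 → Ksupp j :=
    fun x j hx hdx hne => ⟨x, hx, hdx, hne⟩
  have hρsupp : ∀ j, ¬ inF j → ρ j = 0 := by
    intro j hj
    rw [hρdef, Finset.sum_apply]
    refine Finset.sum_eq_zero fun i _ => ?_
    by_contra hne
    exact hj (Or.inr (hKsupp_of_ne (ρi i) j (hρiK i) (hρider i) hne))
  have hρpos : ∀ j, ¬ twoSided j → Ksupp j → 0 < ε j * ρ j := by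
    intro j htw hks
    have hsign : ∀ x ∈ Mi j, 0 ≤ ε j * x := by
      rcases hcase j with h | h
      · exact absurd h htw
      · exact h
    rw [hρdef, Finset.sum_apply, Finset.mul_sum]
    refine Finset.sum_pos' (fun i _ => hsign _ (hρcoordK i j)) ⟨j, Finset.mem_univ j, ?_⟩
    have h3 := (hρi1 j hks).2.2
    have h4 := hsign _ (hρcoordK j j)
    rcases lt_or_eq_of_le h4 with h | h
    · exact h
    · exact absurd (by rcases hε j with he | he <;> rw [he] at h <;> omega) h3
  -- the embedding of the face lattice
  set emb : ({i // inF i} → ℤ) →+ (ι → ℤ) := AddMonoidHom.mk'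
    (fun c => fun j => if h : inF j then g j * c ⟨j, h⟩ else 0)
    (by
      intro c₁ c₂
      funext j
      by_cases h : inF j
      · simp only [dif_pos h, Pi.add_apply]
        ring
      · simp only [dif_neg h, Pi.add_apply, add_zero]) with hemb
  set A : ({i // inF i} → ℤ) →+ (Fin m → ℤ) := d.comp emb with hA
  obtain ⟨CL, hCL⟩ := lattice_section m A
  obtain ⟨CA, hCA⟩ := hom_l1_bound d
  obtain ⟨CE, hCE⟩ := hom_l1_bound emb
  set Nmax : ℕ := Finset.univ.sup N + 1 with hNmax
  set D1 : ℕ := Fintype.card ι * C₁ with hD1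
  set C3 : ℕ := CL * (2 + 2 * CA * D1) with hC3
  set Cη : ℕ := CE * C3 + (C3 + Nmax) * l1norm ρ with hCηdef
  set Cbig : ℕ := max (2 * D1) Cη + 1 with hCbig
  refine ⟨(Cbig : ℝ), by positivity, fun ξ hξ => ?_⟩
  set ξ' : ι → ℤ := fun i => if inF i then ξ i else 0 with hξ'
  have hξ'K : ξ' ∈ K := by
    refine hmem_of_coords _ fun i => ?_
    by_cases h : inF i
    · simp only [hξ', if_pos h]; exact hcoord ξ hξ i
    · simp only [hξ', if_neg h]; exact (Mi i).zero_mem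
  have hor : ∀ i, ξ' i = ξ i ∨ ξ' i = 0 := by
    intro i
    by_cases h : inF i
    · left; simp [hξ', h]
    · right; simp [hξ', h]
  by_cases hd0 : d ξ = 0
  · -- ξ is already in the kernel
    have hξ'ξ : ξ' = ξ := by
      funext i
      by_cases h : inF i
      · simp [hξ', h]
      · simp only [hξ', if_neg h]
        by_contra hne
        exact h (Or.inr (hKsupp_of_ne ξ i hξ hd0 (fun hc => hne hc.symm)))
    refine ⟨ξ', hξ'K, 0, K.zero_mem, hor, ?_, ?_, ?_⟩
    · rw [hξ'ξ, add_zero, hd0]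
    · rw [hξ'ξ, sub_self]
      simp [l1norm_zero, hd0]
    · simp [l1norm_zero, hd0]
  -- main case
  have hV1 : 1 ≤ l1norm (d ξ) := by
    by_contra h
    push_neg at h
    exact hd0 (eq_zero_of_l1norm_eq_zero (by omega))
  set V : ℕ := l1norm (d ξ) with hVdef
  have hdisc : l1norm (ξ - ξ') ≤ 2 * D1 * V := by
    have h1 : l1norm (ξ - ξ') ≤ D1 * (V + 1) := by
      unfold l1norm
      calc ∑ i, ((ξ - ξ') i).natAbs ≤ ∑ _i : ι, C₁ * (V + 1) := by
            refine Finset.sum_le_sum fun i _ => ?_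
            by_cases h : inF i
            · simp [hξ', h]
            · have h2 := hC₁ ξ hξ i h
              simp only [Pi.sub_apply, hξ', if_neg h, sub_zero]
              exact h2
        _ = D1 * (V + 1) := by
            rw [Finset.sum_const, Finset.card_univ, smul_eq_mul, hD1]
            ring
    calc l1norm (ξ - ξ') ≤ D1 * (V + 1) := h1
      _ ≤ 2 * D1 * V := by nlinarith
  -- the corrector
  have hu_range : ∃ c, A c = - d ξ' := by
    set c₀ : {i // inF i} → ℤ := fun i => ξ (i : ι) / g (i : ι) with hc₀
    have hembc₀ : emb c₀ = ξ' := by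
      funext j
      show (if h : inF j then g j * c₀ ⟨j, h⟩ else 0) = ξ' j
      by_cases h : inF j
      · rw [dif_pos h]
        simp only [hξ', if_pos h, hc₀]
        exact Int.mul_ediv_cancel' (hdvd j _ (hcoord ξ hξ j))
      · rw [dif_neg h]
        simp [hξ', h]
    exact ⟨-c₀, by rw [hA, AddMonoidHom.comp_apply, map_neg emb, hembc₀, map_neg d]⟩
  obtain ⟨c', hc'A, hc'b⟩ := hCL (- d ξ') hu_range
  set W : ι → ℤ := emb c' with hWdef
  have hdW : d W = - d ξ' := hc'A
  set T : ℕ := l1norm c' + Nmax with hT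
  set η : ι → ℤ := W + T • ρ with hη
  have hdη : d (ξ' + η) = 0 := by
    rw [map_add, hη, map_add, hdW, map_nsmul, hρker, smul_zero, add_zero]
    ring
  have hWcoord : ∀ j, W j = if h : inF j then g j * c' ⟨j, h⟩ else 0 := fun j => rfl
  have hηcoord : ∀ j, η j = W j + (T : ℤ) * ρ j := by
    intro j
    have e0 : η j = W j + (T • ρ) j := rfl
    rw [e0, Pi.smul_apply, nsmul_eq_mul]
  have hc'j : ∀ (j : ι) (h : inF j), (c' ⟨j, h⟩).natAbs ≤ l1norm c' :=
    fun j h => l1norm_apply_le c' ⟨j, h⟩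
  have hNj : ∀ j, N j + 1 ≤ Nmax := by
    intro j
    rw [hNmax]
    exact Nat.add_le_add_right (Finset.le_sup (Finset.mem_univ j)) 1
  have hηK : η ∈ K := by
    refine hmem_of_coords _ fun j => ?_
    by_cases h : inF j
    · have hdvdW : g j ∣ W j := by
        rw [hWcoord j, dif_pos h]
        exact Dvd.intro _ rfl
      have hdvdρ : g j ∣ ρ j := hdvd j _ (hρMi j)
      have hdvdη : g j ∣ η j := by
        rw [hηcoord j]
        exact dvd_add hdvdW (Dvd.dvd.mul_left hdvdρ _)
      rcases hcase j with hfull | hsign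
      · exact hfull _ hdvdη
      · -- one-sided coordinate in F
        have htw : ¬ twoSided j := by
          intro htw
          have h1 := hsign _ (htw (g j) dvd_rfl)
          have h2 := hsign _ (htw (-(g j)) (dvd_neg.mpr dvd_rfl))
          have h3 := hgpos j
          rcases hε j with he | he <;> rw [he] at h1 h2 <;> omega
        have hks : Ksupp j := h.resolve_left htw
        have hρp : 0 < ε j * ρ j := hρpos j htw hks
        have hε2 : ε j * ε j = 1 := by rcases hε j with he | he <;> rw [he] <;> ring
        have hdvdP : g j ∣ ε j * ρ j := Dvd.dvd.mul_left hdvdρ _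
        have hPg : g j ≤ ε j * ρ j := Int.le_of_dvd hρp hdvdP
        have hWb : (W j).natAbs ≤ (g j).natAbs * l1norm c' := by
          rw [hWcoord j, dif_pos h, Int.natAbs_mul]
          exact Nat.mul_le_mul_left _ (hc'j j h)
        have hεW : -(g j * (l1norm c' : ℤ)) ≤ ε j * W j := by
          have h1 : (ε j * W j) ≥ -((W j).natAbs : ℤ) := by
            rcases hε j with he | he <;> rw [he] <;> omega
          have h2 : ((W j).natAbs : ℤ) ≤ g j * l1norm c' := by
            have h4 : ((g j).natAbs : ℤ) = g j := Int.natAbs_of_nonneg (le_of_lt (hgpos j))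
            calc ((W j).natAbs : ℤ) ≤ (((g j).natAbs * l1norm c' : ℕ) : ℤ) := by
                  exact_mod_cast hWb
              _ = g j * l1norm c' := by rw [Nat.cast_mul, h4]
          omega
        have hηb : g j * ((N j : ℤ) + 1) ≤ ε j * η j := by
          have e1 : ε j * η j = ε j * W j + (T : ℤ) * (ε j * ρ j) := by
            rw [hηcoord j]; ring
          have h2 : (T : ℤ) * (ε j * ρ j) ≥ (T : ℤ) * g j := by
            have : (0:ℤ) ≤ (T:ℤ) := Int.natCast_nonneg _
            nlinarith
          have h3 : (T : ℤ) = (l1norm c' : ℤ) + Nmax := by rw [hT]; push_cast; ring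
          have h4 : ((N j : ℤ) + 1) ≤ (Nmax : ℤ) := by exact_mod_cast hNj j
          have h5 : g j * ((N j : ℤ) + 1) ≤ g j * Nmax :=
            mul_le_mul_of_nonneg_left h4 (le_of_lt (hgpos j))
          have h6 := hgpos j
          nlinarith
        have hdvdεη : g j ∣ ε j * η j := Dvd.dvd.mul_left hdvdη _
        obtain ⟨q, hq⟩ := hdvdεη
        have hqN : (N j : ℤ) + 1 ≤ q := by
          have h6 := hgpos j
          nlinarith [hηb, hq]
        have hq0 : 0 ≤ q := by
          have := Int.natCast_nonneg (N j)
          omega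
        set nq : ℕ := q.toNat with hnq
        have hqn : (nq : ℤ) = q := Int.toNat_of_nonneg hq0
        have hNle : N j ≤ nq := by omega
        have hmem := hLarge j nq hNle
        have hηeq : η j = ε j * (g j * (nq : ℤ)) := by
          have e4 : ε j * (ε j * η j) = ε j * (g j * q) := by rw [hq]
          have e3 : η j = ε j * (g j * q) := by
            calc η j = (ε j * ε j) * η j := by rw [hε2, one_mul]
              _ = ε j * (ε j * η j) := by ring
              _ = ε j * (g j * q) := e4
          rw [e3, hqn]
        rw [hηeq]
        exact hmem
    · have e1 : η j = 0 := by
        rw [hηcoord j, hWcoord j, dif_neg h, hρsupp j h, mul_zero, add_zero]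
      rw [e1]; exact (Mi j).zero_mem
  -- norms
  have hl1u : l1norm (- d ξ') ≤ (1 + 2 * CA * D1) * V := by
    rw [l1norm_neg]
    have e1 : d ξ' = d ξ + d (ξ' - ξ) := by rw [← map_add]; congr 1; abel
    calc l1norm (d ξ') ≤ l1norm (d ξ) + l1norm (d (ξ' - ξ)) := by
          rw [e1]; exact l1norm_add_le _ _
      _ ≤ V + CA * l1norm (ξ' - ξ) := Nat.add_le_add_left (hCA _) _
      _ = V + CA * l1norm (ξ - ξ') := by rw [l1norm_sub_comm]
      _ ≤ V + CA * (2 * D1 * V) := Nat.add_le_add_left (Nat.mul_le_mul_left _ hdisc) _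
      _ = (1 + 2 * CA * D1) * V := by ring
  have hc'V : l1norm c' ≤ C3 * V := by
    calc l1norm c' ≤ CL * (l1norm (- d ξ') + 1) := hc'b
      _ ≤ CL * ((1 + 2 * CA * D1) * V + V) := Nat.mul_le_mul_left _ (by omega)
      _ = C3 * V := by rw [hC3]; ring
  have hl1η : l1norm η ≤ Cη * V := by
    have hWb2 : l1norm W ≤ CE * l1norm c' := hCE c'
    calc l1norm η ≤ l1norm W + l1norm (T • ρ) := l1norm_add_le _ _
      _ = l1norm W + T * l1norm ρ := by rw [l1norm_nsmul]
      _ ≤ CE * l1norm c' + (l1norm c' + Nmax) * l1norm ρ := by rw [hT]; omega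
      _ ≤ CE * (C3 * V) + (C3 * V + Nmax) * l1norm ρ := by
          have h1 : CE * l1norm c' ≤ CE * (C3 * V) := Nat.mul_le_mul_left _ hc'V
          have h2 : (l1norm c' + Nmax) * l1norm ρ ≤ (C3 * V + Nmax) * l1norm ρ :=
            Nat.mul_le_mul_right _ (by omega)
          omega
      _ ≤ Cη * V := by
          have e : (CE * C3 + (C3 + Nmax) * l1norm ρ) * V =
              CE * (C3 * V) + C3 * V * l1norm ρ + Nmax * l1norm ρ * V := by ring
          have h3 : Nmax * l1norm ρ ≤ Nmax * l1norm ρ * V :=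
            Nat.le_mul_of_pos_right _ (by omega)
          have h4 : (C3 * V + Nmax) * l1norm ρ = C3 * V * l1norm ρ + Nmax * l1norm ρ := by
            ring
          rw [hCηdef, e, h4]
          linarith
  refine ⟨ξ', hξ'K, η, hηK, hor, hdη, ?_, ?_⟩
  · have h1 : l1norm (ξ - ξ') ≤ Cbig * V := by
      refine le_trans hdisc (Nat.mul_le_mul_right _ ?_)
      have := le_max_left (2 * D1) Cη
      omega
    calc (l1norm (ξ - ξ') : ℝ) ≤ ((Cbig * V : ℕ) : ℝ) := by exact_mod_cast h1
      _ = (Cbig : ℝ) * (l1norm (d ξ) : ℝ) := by rw [hVdef]; push_cast; ring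
  · have h1 : l1norm η ≤ Cbig * V := by
      refine le_trans hl1η (Nat.mul_le_mul_right _ ?_)
      have := le_max_right (2 * D1) Cη
      omega
    calc (l1norm η : ℝ) ≤ ((Cbig * V : ℕ) : ℝ) := by exact_mod_cast h1
      _ = (Cbig : ℝ) * (l1norm (d ξ) : ℝ) := by rw [hVdef]; push_cast; ring
end

section
/- Let X be a finite set and Y ⊆ X a subset. Let σ₁, …, σ_k be permutations of X with σ₁∘σ₂∘⋯∘σ_k equal to the identity of X, and let τ₁, …, τ_k be permutations of Y such that for each i and each y ∈ Y with σᵢ(y) ∈ Y one has τᵢ(y) = σᵢ(y) (each τᵢ is a restriction of σᵢ to Y in the sense of the paper). Then |{y ∈ Y : (τ₁∘τ₂∘⋯∘τ_k)(y) ≠ y}| ≤ 2k·(|X| − |Y|). (Restrictions of the generators of an action to a subset form an almost-action: every relation satisfied by the σᵢ is almost satisfied, in normalized Hamming distance, by the τᵢ.) -/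
private lemma restriction_aux (X : Type) [Fintype X] (Y : Finset X)
    (L : List (Equiv.Perm X)) (M : List (Equiv.Perm {x : X // x ∈ Y}))
    (h : List.Forall₂ (fun s t => ∀ y : {x : X // x ∈ Y},
        s (y : X) ∈ Y → ((t y : X) = s (y : X))) L M) :
    {y : {x : X // x ∈ Y} | (M.prod y : X) ≠ L.prod (y : X)}.ncard ≤
      M.length * (Fintype.card X - Y.card) := by
  classical
  induction h with
  | nil => simp
  | @cons s t L' M' h1 h2 ih =>
    set D : Set {x : X // x ∈ Y} := {y | (M'.prod y : X) ≠ L'.prod (y : X)} with hD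
    set B : Set {x : X // x ∈ Y} := {y | s ((M'.prod y : X)) ∉ Y} with hB
    have hsub : {y : {x : X // x ∈ Y} | ((t :: M').prod y : X) ≠ (s :: L').prod (y : X)}
        ⊆ D ∪ B := by
      intro y hy
      simp only [List.prod_cons, Equiv.Perm.mul_apply, Set.mem_setOf_eq] at hy
      by_contra hcon
      simp only [Set.mem_union, hD, hB, Set.mem_setOf_eq, not_or, not_not] at hcon
      obtain ⟨hd, hb⟩ := hcon
      apply hy
      rw [h1 (M'.prod y) hb, hd]
    have hBcard : B.ncard ≤ Fintype.card X - Y.card := by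
      have hB0 : B = (fun y => M'.prod y) ⁻¹' {z : {x : X // x ∈ Y} | s (z : X) ∉ Y} := rfl
      have heq : B.ncard = {z : {x : X // x ∈ Y} | s (z : X) ∉ Y}.ncard := by
        have himg : (fun y => M'.prod y) ⁻¹' {z : {x : X // x ∈ Y} | s (z : X) ∉ Y}
            = ⇑M'.prod.symm '' {z : {x : X // x ∈ Y} | s (z : X) ∉ Y} := by
          ext y
          constructor
          · intro hy; exact ⟨M'.prod y, hy, by simp⟩
          · rintro ⟨z, hz, rfl⟩; simpa using hz
        rw [hB0, himg, Set.ncard_image_of_injective _ M'.prod.symm.injective]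
      rw [heq]
      have hinj : Set.InjOn (fun z : {x : X // x ∈ Y} => s (z : X))
          {z : {x : X // x ∈ Y} | s (z : X) ∉ Y} := by
        intro a _ b _ hab
        exact Subtype.ext (s.injective hab)
      calc {z : {x : X // x ∈ Y} | s (z : X) ∉ Y}.ncard
          = ((fun z : {x : X // x ∈ Y} => s (z : X)) ''
              {z : {x : X // x ∈ Y} | s (z : X) ∉ Y}).ncard :=
            (Set.ncard_image_of_injOn hinj).symm
        _ ≤ ((Yᶜ : Finset X) : Set X).ncard := by
            apply Set.ncard_le_ncard _ (Set.toFinite _)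
            rintro x ⟨z, hz, rfl⟩
            simpa using hz
        _ = Fintype.card X - Y.card := by
            rw [Set.ncard_coe_finset, Finset.card_compl]
    calc {y : {x : X // x ∈ Y} | ((t :: M').prod y : X) ≠ (s :: L').prod (y : X)}.ncard
        ≤ (D ∪ B).ncard := Set.ncard_le_ncard hsub (Set.toFinite _)
      _ ≤ D.ncard + B.ncard := Set.ncard_union_le D B
      _ ≤ M'.length * (Fintype.card X - Y.card) + (Fintype.card X - Y.card) :=
          Nat.add_le_add ih hBcard
      _ = (t :: M').length * (Fintype.card X - Y.card) := by
          simp [List.length_cons, Nat.succ_mul]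

/-- **Restrictions form an almost-action.** If `σ₁ ∘ ⋯ ∘ σ_k = id` on `X` and each
`τᵢ` is a restriction of `σᵢ` to a subset `Y ⊆ X` (i.e. `τᵢ(y) = σᵢ(y)` whenever
`y ∈ Y` and `σᵢ(y) ∈ Y`), then the composition `τ₁ ∘ ⋯ ∘ τ_k` moves at most
`2k·(|X| − |Y|)` points of `Y`. -/
theorem restriction_almost_action
    (X : Type) [Fintype X] (Y : Finset X) (k : ℕ)
    (σ : Fin k → Equiv.Perm X)
    (hσ : (List.ofFn σ).prod = 1)
    (τ : Fin k → Equiv.Perm {x : X // x ∈ Y})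
    (hτ : ∀ (i : Fin k) (y : {x : X // x ∈ Y}),
      σ i (y : X) ∈ Y → ((τ i y : X) = σ i (y : X))) :
    {y : {x : X // x ∈ Y} | (List.ofFn τ).prod y ≠ y}.ncard ≤
      2 * k * (Fintype.card X - Y.card) := by
  have hforall : List.Forall₂ (fun s t => ∀ y : {x : X // x ∈ Y},
      s (y : X) ∈ Y → ((t y : X) = s (y : X))) (List.ofFn σ) (List.ofFn τ) := by
    rw [List.forall₂_iff_get]
    refine ⟨by simp, fun i h1 h2 => ?_⟩
    simp only [List.get_eq_getElem, List.getElem_ofFn]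
    exact hτ _
  have key := restriction_aux X Y (List.ofFn σ) (List.ofFn τ) hforall
  rw [hσ] at key
  simp only [Equiv.Perm.one_apply, List.length_ofFn] at key
  have hset : {y : {x : X // x ∈ Y} | (List.ofFn τ).prod y ≠ y}
      = {y : {x : X // x ∈ Y} | ((List.ofFn τ).prod y : X) ≠ (y : X)} := by
    ext y; simp only [Set.mem_setOf_eq, ne_eq, Subtype.ext_iff]
  rw [hset]
  calc _ ≤ k * (Fintype.card X - Y.card) := key
    _ ≤ 2 * k * (Fintype.card X - Y.card) := by
        rw [mul_assoc]; exact Nat.le_mul_of_pos_left _ two_pos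
end
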